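/- arXiv:2308.11427 — 15 statements merged into one kernel-verified Lean document; each statement's English description precedes it below -/
import Mathlib

section
/- Let X be a nonempty set and r : X × X → X × X a map of the form r(x,y) = (L_x(y), y), where L_x : X → X for each x ∈ X. Assume (i) each L_x is bijective (left nondegeneracy) and (ii) condition l1 holds, which for this r reads: L_x(L_y(z)) = L_{L_x(y)}(L_y(z)) for all x,y,z ∈ X. Then: (1) there exists a bijection f : X → X such that L_x = f for all x ∈ X, i.e. r(x,y) = (f(y), y) for all x,y; (2) r ∘ r = r; (3) r satisfies the set-theoretic braid relation (r × id) ∘ (id × r) ∘ (r × id) = (id × r) ∘ (r × id) ∘ (id × r) on X × X × X. -/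
/-- A left nondegenerate quadratic set of the form `r(x,y) = (L x y, y)`
satisfying condition l1 has all left actions equal to a single bijection `f`,
is idempotent, and satisfies the set-theoretic braid relation. -/
theorem stmt_0 {X : Type*} [Nonempty X] (L : X → X → X)
    (hbij : ∀ x : X, Function.Bijective (L x))
    (hl1 : ∀ x y z : X, L x (L y z) = L (L x y) (L y z)) :
    (∃ f : X ≃ X, ∀ x y : X, L x y = f y) ∧
    (let r : X × X → X × X := fun p => (L p.1 p.2, p.2)
     r ∘ r = r) ∧
    (let r : X × X → X × X := fun p => (L p.1 p.2, p.2)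
     let r12 : X × X × X → X × X × X :=
       fun t => ((r (t.1, t.2.1)).1, (r (t.1, t.2.1)).2, t.2.2)
     let r23 : X × X × X → X × X × X :=
       fun t => (t.1, r (t.2.1, t.2.2))
     r12 ∘ r23 ∘ r12 = r23 ∘ r12 ∘ r23) := by
  -- First: L x = L x' for all x, x'.
  have key : ∀ x x' : X, L x = L x' := by
    intro x x'
    obtain ⟨y, hy⟩ := (hbij x).2 x'
    funext w
    obtain ⟨z, hz⟩ := (hbij y).2 w
    have := hl1 x y z
    rw [hz, hy] at this
    exact this
  obtain ⟨x0⟩ := ‹Nonempty X›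
  have hall : ∀ x y : X, L x y = L x0 y := fun x y => by rw [key x x0]
  refine ⟨⟨Equiv.ofBijective (L x0) (hbij x0), fun x y => hall x y⟩, ?_, ?_⟩
  · funext p
    simp [hall]
  · funext t
    simp [hall]
end

section
/- Let k be a field, n ≥ 1, and f a permutation of {1,…,n}. In the free associative k-algebra k⟨x₁,…,x_n⟩, the two-sided ideal generated by the n² elements {x_j x_p − x_{f(p)} x_p : 1 ≤ j,p ≤ n} is equal to the two-sided ideal generated by the n(n−1) elements {x_j x_p − x₁ x_p : 2 ≤ j ≤ n, 1 ≤ p ≤ n}. Consequently the Yang–Baxter algebra A(k,X,r_f) has the finite presentation k⟨x₁,…,x_n⟩/(x_j x_p − x₁ x_p : 2 ≤ j ≤ n, 1 ≤ p ≤ n). -/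
open FreeAlgebra

lemma tsi_span_le {R : Type*} [Ring R] {s : Set R} {I : TwoSidedIdeal R}
    (h : s ⊆ I) : TwoSidedIdeal.span s ≤ I := fun _ hx =>
  TwoSidedIdeal.mem_span_iff.mp hx I h

/-- For a permutation idempotent solution `r_f` on `{x₁,…,xₙ}` (with `x₁`
indexed by `⟨0, _⟩`), the two-sided ideal of the free algebra generated by the `n²`
elements `x_j x_p − x_{f(p)} x_p` equals the two-sided ideal generated by the `n(n−1)`
elements `x_j x_p − x₁ x_p` (`j ≠ 1`); consequently the Yang–Baxter algebra
`A(k,X,r_f)` has the finite presentation by the latter relations. -/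
theorem stmt_1 (k : Type*) [Field k] (n : ℕ) (hn : 1 ≤ n) (f : Equiv.Perm (Fin n)) :
    TwoSidedIdeal.span {a : FreeAlgebra k (Fin n) |
        ∃ j p : Fin n, a = ι k j * ι k p - ι k (f p) * ι k p} =
      TwoSidedIdeal.span {a : FreeAlgebra k (Fin n) |
        ∃ j p : Fin n, j ≠ ⟨0, hn⟩ ∧ a = ι k j * ι k p - ι k (⟨0, hn⟩ : Fin n) * ι k p} ∧
    Nonempty
      ((RingQuot fun a b : FreeAlgebra k (Fin n) =>
          ∃ j p : Fin n, a = ι k j * ι k p ∧ b = ι k (f p) * ι k p) ≃ₐ[k]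
        (RingQuot fun a b : FreeAlgebra k (Fin n) =>
          ∃ j p : Fin n, j ≠ ⟨0, hn⟩ ∧ a = ι k j * ι k p ∧ b = ι k (⟨0, hn⟩ : Fin n) * ι k p)) := by
  set e : Fin n := ⟨0, hn⟩
  constructor
  · -- ideal equality
    apply le_antisymm
    · apply tsi_span_le
      rintro a ⟨j, p, rfl⟩
      have h : ∀ j p : Fin n, ι k j * ι k p - ι k e * ι k p ∈
          TwoSidedIdeal.span {a : FreeAlgebra k (Fin n) |
            ∃ j p : Fin n, j ≠ e ∧ a = ι k j * ι k p - ι k e * ι k p} := by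
        intro j p
        by_cases hj : j = e
        · subst hj; rw [sub_self]; exact TwoSidedIdeal.zero_mem _
        · exact TwoSidedIdeal.subset_span ⟨j, p, hj, rfl⟩
      have : ι k j * ι k p - ι k (f p) * ι k p =
          (ι k j * ι k p - ι k e * ι k p) - (ι k (f p) * ι k p - ι k e * ι k p) := by abel
      rw [this]
      exact TwoSidedIdeal.sub_mem _ (h j p) (h (f p) p)
    · apply tsi_span_le
      rintro a ⟨j, p, hj, rfl⟩
      have h1 : ι k j * ι k p - ι k (f p) * ι k p ∈
          TwoSidedIdeal.span {a : FreeAlgebra k (Fin n) |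
            ∃ j p : Fin n, a = ι k j * ι k p - ι k (f p) * ι k p} :=
        TwoSidedIdeal.subset_span ⟨j, p, rfl⟩
      have h2 : ι k e * ι k p - ι k (f p) * ι k p ∈
          TwoSidedIdeal.span {a : FreeAlgebra k (Fin n) |
            ∃ j p : Fin n, a = ι k j * ι k p - ι k (f p) * ι k p} :=
        TwoSidedIdeal.subset_span ⟨e, p, rfl⟩
      have : ι k j * ι k p - ι k e * ι k p =
          (ι k j * ι k p - ι k (f p) * ι k p) - (ι k e * ι k p - ι k (f p) * ι k p) := by abel
      rw [this]
      exact TwoSidedIdeal.sub_mem _ h1 h2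
  · -- algebra isomorphism
    set r1 : FreeAlgebra k (Fin n) → FreeAlgebra k (Fin n) → Prop :=
      fun a b => ∃ j p : Fin n, a = ι k j * ι k p ∧ b = ι k (f p) * ι k p with hr1
    set r2 : FreeAlgebra k (Fin n) → FreeAlgebra k (Fin n) → Prop :=
      fun a b => ∃ j p : Fin n, j ≠ e ∧ a = ι k j * ι k p ∧ b = ι k e * ι k p with hr2
    have w1 : ∀ ⦃a b⦄, r1 a b → RingQuot.mkAlgHom k r2 a = RingQuot.mkAlgHom k r2 b := by
      rintro a b ⟨j, p, rfl, rfl⟩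
      have c : ∀ j : Fin n, RingQuot.mkAlgHom k r2 (ι k j * ι k p) =
          RingQuot.mkAlgHom k r2 (ι k e * ι k p) := by
        intro j
        by_cases hj : j = e
        · rw [hj]
        · exact RingQuot.mkAlgHom_rel k ⟨j, p, hj, rfl, rfl⟩
      rw [c j, c (f p)]
    have w2 : ∀ ⦃a b⦄, r2 a b → RingQuot.mkAlgHom k r1 a = RingQuot.mkAlgHom k r1 b := by
      rintro a b ⟨j, p, hj, rfl, rfl⟩
      have h1 : RingQuot.mkAlgHom k r1 (ι k j * ι k p) =
          RingQuot.mkAlgHom k r1 (ι k (f p) * ι k p) :=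
        RingQuot.mkAlgHom_rel k ⟨j, p, rfl, rfl⟩
      have h2 : RingQuot.mkAlgHom k r1 (ι k e * ι k p) =
          RingQuot.mkAlgHom k r1 (ι k (f p) * ι k p) :=
        RingQuot.mkAlgHom_rel k ⟨e, p, rfl, rfl⟩
      rw [h1, h2]
    refine ⟨AlgEquiv.ofAlgHom (RingQuot.liftAlgHom k ⟨RingQuot.mkAlgHom k r2, w1⟩)
      (RingQuot.liftAlgHom k ⟨RingQuot.mkAlgHom k r1, w2⟩) ?_ ?_⟩
    · refine RingQuot.ringQuot_ext' k _ _ (FreeAlgebra.hom_ext (funext fun i => ?_))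
      simp [RingQuot.liftAlgHom_mkAlgHom_apply]
    · refine RingQuot.ringQuot_ext' k _ _ (FreeAlgebra.hom_ext (funext fun i => ?_))
      simp [RingQuot.liftAlgHom_mkAlgHom_apply]
end

section
/- Let k be a field, n ≥ 1, f a permutation of {1,…,n}, and A = A(k,X,r_f) the Yang–Baxter algebra of the permutation idempotent solution r_f. The images under the quotient map of the monomials {1} ∪ {x₁^α x_m : α ∈ ℕ, 1 ≤ m ≤ n} (where x₁^α x_m denotes the word consisting of α copies of x₁ followed by x_m) form a k-vector-space basis of A. In particular, for each d ≥ 1 the n elements x₁^{d−1} x₁, x₁^{d−1} x₂, …, x₁^{d−1} x_n are linearly independent in A and their span is the image in A of the span of all words of length d. -/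
noncomputable section

open FreeAlgebra

/-- The defining relations of the Yang–Baxter algebra of the permutation idempotent
solution `r_f(x,y) = (f(y), y)`. -/
def ybRel (k : Type*) [Field k] (n : ℕ) (f : Equiv.Perm (Fin n)) :
    FreeAlgebra k (Fin n) → FreeAlgebra k (Fin n) → Prop :=
  fun a b => ∃ j p : Fin n, a = ι k j * ι k p ∧ b = ι k (f p) * ι k p

/-- The Yang–Baxter algebra `A(k, X, r_f)`. -/
abbrev YBA (k : Type*) [Field k] (n : ℕ) (f : Equiv.Perm (Fin n)) :=
  RingQuot (ybRel k n f)

/-- The image of the generator `x_i` in `A(k, X, r_f)`. -/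
def xgen (k : Type*) [Field k] (n : ℕ) (f : Equiv.Perm (Fin n)) (i : Fin n) :
    YBA k n f :=
  RingQuot.mkAlgHom k (ybRel k n f) (ι k i)

/-- The image in `A(k, X, r_f)` of the word (monomial) indexed by the list `w`. -/
def ybWord (k : Type*) [Field k] (n : ℕ) (f : Equiv.Perm (Fin n)) (w : List (Fin n)) :
    YBA k n f :=
  RingQuot.mkAlgHom k (ybRel k n f) ((w.map (ι k)).prod)

/-!
In `A` the product `x_j x_p` equals `x_{f(p)} x_p` whatever `j` is, so every word of length
`d ≥ 1` equals `x₁^{d-1}` times its last letter; hence `1` and the monomials `x₁^α x_m` span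
`A`.
They are independent because `A` is isomorphic to the monoid algebra of the semigroup `ℕ × X`
with `(α, m) * (β, p) = (α + β + 1, p)`, with a unit adjoined: `x_i` goes to `(0, i)`, hence
`x₁^α x_m` to `(α, m)`.
-/

@[ext]
structure YBMonomial (X : Type*) where
  exp : ℕ
  last : X

namespace YBMonomial

variable {X : Type*}

instance : Semigroup (YBMonomial X) where
  mul u v := ⟨u.exp + v.exp + 1, v.last⟩
  mul_assoc _ _ _ := by
    ext
    · change _ + _ + 1 + _ + 1 = _ + (_ + _ + 1) + 1
      omega
    · rfl

@[simp]
theorem mul_def (u v : YBMonomial X) : u * v = ⟨u.exp + v.exp + 1, v.last⟩ := rfl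

theorem coe_pow_mul_coe (a : X) (e b : ℕ) (y : X) :
    ((⟨0, a⟩ : YBMonomial X) : WithOne (YBMonomial X)) ^ e * ↑(⟨b, y⟩ : YBMonomial X) =
      ↑(⟨e + b, y⟩ : YBMonomial X) := by
  induction e generalizing b with
  | zero => simp
  | succ e ih =>
    rw [pow_succ, mul_assoc, ← WithOne.coe_mul, mul_def, ih]
    simp only [WithOne.coe_inj, YBMonomial.mk.injEq, and_true]
    omega

def withOneEquiv : WithOne (YBMonomial X) ≃ Option (ℕ × X) :=
  Equiv.optionCongr
    ⟨fun u => (u.exp, u.last), fun p => ⟨p.1, p.2⟩, fun _ => rfl, fun _ => rfl⟩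

end YBMonomial

section

variable {k : Type*} [Field k] {n : ℕ} {f : Equiv.Perm (Fin n)}

theorem xgen_mul_xgen_eq (a c b : Fin n) :
    xgen k n f a * xgen k n f b = xgen k n f c * xgen k n f b := by
  have key (j : Fin n) : xgen k n f j * xgen k n f b = xgen k n f (f b) * xgen k n f b := by
    simpa only [xgen, ← map_mul] using RingQuot.mkAlgHom_rel k ⟨j, b, rfl, rfl⟩
  rw [key a, key c]

theorem ybWord_cons (a : Fin n) (w : List (Fin n)) :
    ybWord k n f (a :: w) = xgen k n f a * ybWord k n f w := by
  simp [ybWord, xgen]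

variable [NeZero n]

theorem xgen_mul_pow_mul_xgen (a : Fin n) (e : ℕ) (m : Fin n) :
    xgen k n f a * (xgen k n f 0 ^ e * xgen k n f m) =
      xgen k n f 0 ^ (e + 1) * xgen k n f m := by
  cases e with
  | zero =>
    rw [pow_zero, one_mul, zero_add, pow_one]
    exact xgen_mul_xgen_eq a 0 m
  | succ e =>
    rw [pow_succ', mul_assoc, ← mul_assoc (xgen k n f a), xgen_mul_xgen_eq a 0 0]
    simp only [pow_succ', mul_assoc]

theorem pow_mul_xgen_mul_pow_mul_xgen (α : ℕ) (m : Fin n) (β : ℕ) (p : Fin n) :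
    (xgen k n f 0 ^ α * xgen k n f m) * (xgen k n f 0 ^ β * xgen k n f p) =
      xgen k n f 0 ^ (α + β + 1) * xgen k n f p := by
  rw [mul_assoc, xgen_mul_pow_mul_xgen, ← mul_assoc, ← pow_add, add_assoc]

theorem ybWord_eq_pow_mul_xgen (w : List (Fin n)) (hw : w ≠ []) :
    ybWord k n f w = xgen k n f 0 ^ (w.length - 1) * xgen k n f (w.getLast hw) := by
  induction w with
  | nil => contradiction
  | cons a w ih =>
    rcases eq_or_ne w [] with rfl | hw'
    · simp [ybWord, xgen]
    · rw [ybWord_cons, ih hw', xgen_mul_pow_mul_xgen, List.getLast_cons hw', List.length_cons]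
      have hlen := List.length_pos_iff.mpr hw'
      congr 2
      omega

theorem range_pow_mul_xgen_eq_ybWord (d : ℕ) (hd : 1 ≤ d) :
    Set.range (fun m : Fin n => xgen k n f 0 ^ (d - 1) * xgen k n f m) =
      {a : YBA k n f | ∃ w : List (Fin n), w.length = d ∧ a = ybWord k n f w} := by
  ext a
  constructor
  · rintro ⟨m, rfl⟩
    have hlen : (List.replicate (d - 1) 0 ++ [m]).length = d := by simp; omega
    refine ⟨List.replicate (d - 1) 0 ++ [m], hlen, ?_⟩
    rw [ybWord_eq_pow_mul_xgen _ (by simp), hlen, List.getLast_concat]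
  · rintro ⟨w, rfl, rfl⟩
    have hw : w ≠ [] := List.ne_nil_of_length_pos hd
    exact ⟨w.getLast hw, (ybWord_eq_pow_mul_xgen w hw).symm⟩

end

namespace YBA

variable (k : Type*) [Field k] {n : ℕ} (f : Equiv.Perm (Fin n))

def toMonoidAlgebra : YBA k n f →ₐ[k] MonoidAlgebra k (WithOne (YBMonomial (Fin n))) :=
  RingQuot.liftAlgHom k
    ⟨lift k fun i => MonoidAlgebra.single ↑(⟨0, i⟩ : YBMonomial (Fin n)) 1, by
      rintro _ _ ⟨j, p, rfl, rfl⟩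
      simp only [map_mul, lift_ι_apply, MonoidAlgebra.single_mul_single, ← WithOne.coe_mul,
        YBMonomial.mul_def]⟩

theorem toMonoidAlgebra_xgen (i : Fin n) :
    toMonoidAlgebra k f (xgen k n f i) =
      MonoidAlgebra.single ↑(⟨0, i⟩ : YBMonomial (Fin n)) 1 := by
  simp [toMonoidAlgebra, xgen]

variable [NeZero n]

def ofMonomial : YBMonomial (Fin n) →ₙ* YBA k n f where
  toFun u := xgen k n f 0 ^ u.exp * xgen k n f u.last
  map_mul' _ _ := (pow_mul_xgen_mul_pow_mul_xgen _ _ _ _).symm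

def ofMonoidAlgebra : MonoidAlgebra k (WithOne (YBMonomial (Fin n))) →ₐ[k] YBA k n f :=
  MonoidAlgebra.lift k _ _ (WithOne.lift (ofMonomial k f))

theorem ofMonoidAlgebra_single_coe (u : YBMonomial (Fin n)) :
    ofMonoidAlgebra k f (MonoidAlgebra.single ↑u 1) =
      xgen k n f 0 ^ u.exp * xgen k n f u.last := by
  simp [ofMonoidAlgebra, ofMonomial]

def equivMonoidAlgebra : YBA k n f ≃ₐ[k] MonoidAlgebra k (WithOne (YBMonomial (Fin n))) :=
  AlgEquiv.ofAlgHom (toMonoidAlgebra k f) (ofMonoidAlgebra k f)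
    (by
      refine MonoidAlgebra.algHom_ext ?_ (Subsingleton.elim _ _)
      intro u
      induction u using WithOne.cases_on
      · simp [← MonoidAlgebra.one_def]
      · simp [ofMonoidAlgebra_single_coe, toMonoidAlgebra_xgen, MonoidAlgebra.single_pow,
          YBMonomial.coe_pow_mul_coe])
    (by
      ext i
      change ofMonoidAlgebra k f (toMonoidAlgebra k f (xgen k n f i)) = xgen k n f i
      simp [toMonoidAlgebra_xgen, ofMonoidAlgebra_single_coe])

def monomialBasis : Module.Basis (Option (ℕ × Fin n)) k (YBA k n f) :=
  ((MonoidAlgebra.basis _ k).map (equivMonoidAlgebra k f).symm.toLinearEquiv).reindex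
    YBMonomial.withOneEquiv

theorem monomialBasis_apply (o : Option (ℕ × Fin n)) :
    monomialBasis k f o = o.elim 1 fun am => xgen k n f 0 ^ am.1 * xgen k n f am.2 := by
  rw [monomialBasis, Module.Basis.reindex_apply, Module.Basis.map_apply,
    MonoidAlgebra.basis_apply]
  change ofMonoidAlgebra k f _ = _
  cases o with
  | none => exact map_one (ofMonoidAlgebra k f)
  | some am => exact ofMonoidAlgebra_single_coe k f ⟨am.1, am.2⟩

end YBA

/-- the images of the monomials `{1} ∪ {x₁^α x_m}` form a `k`-basis of
`A(k,X,r_f)`; in particular, for each `d ≥ 1` the `n` elements `x₁^{d-1} x_m` are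
linearly independent and span the image of the span of all words of length `d`. -/
theorem stmt_2 (k : Type*) [Field k] (n : ℕ) [NeZero n] (f : Equiv.Perm (Fin n)) :
    LinearIndependent k
      (fun o : Option (ℕ × Fin n) =>
        o.elim (1 : YBA k n f) fun am => (xgen k n f 0) ^ am.1 * xgen k n f am.2) ∧
    Submodule.span k
      (Set.range fun o : Option (ℕ × Fin n) =>
        o.elim (1 : YBA k n f) fun am => (xgen k n f 0) ^ am.1 * xgen k n f am.2) = ⊤ ∧
    ∀ d : ℕ, 1 ≤ d →
      LinearIndependent k
        (fun m : Fin n => (xgen k n f 0) ^ (d - 1) * xgen k n f m) ∧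
      Submodule.span k
        (Set.range fun m : Fin n => (xgen k n f 0) ^ (d - 1) * xgen k n f m) =
      Submodule.span k
        {a : YBA k n f | ∃ w : List (Fin n), w.length = d ∧ a = ybWord k n f w} := by
  have hbasis : ⇑(YBA.monomialBasis k f) = fun o : Option (ℕ × Fin n) =>
      o.elim (1 : YBA k n f) fun am => xgen k n f 0 ^ am.1 * xgen k n f am.2 :=
    funext (YBA.monomialBasis_apply k f)
  have hli := hbasis ▸ (YBA.monomialBasis k f).linearIndependent
  refine ⟨hli, hbasis ▸ (YBA.monomialBasis k f).span_eq, fun d hd => ⟨?_, ?_⟩⟩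
  · exact hli.comp (fun m => some (d - 1, m)) fun m m' h => by simpa using h
  · rw [range_pow_mul_xgen_eq_ybWord d hd]

end
end

section
/- Let k be a field and n ≥ 1. For any two permutations f and g of X = {x₁,…,x_n}, the Yang–Baxter algebras A(k,X,r_f) and A(k,X,r_g) of the corresponding permutation idempotent solutions are isomorphic as k-algebras. -/
noncomputable section

open FreeAlgebra

lemma ybHom_resp (k : Type*) [Field k] (n : ℕ) (f g : Equiv.Perm (Fin n)) :
    ∀ ⦃a b⦄, ybRel k n f a b →
      (RingQuot.mkAlgHom k (ybRel k n g)) a = (RingQuot.mkAlgHom k (ybRel k n g)) b := by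
  rintro a b ⟨j, p, rfl, rfl⟩
  have h1 : RingQuot.mkAlgHom k (ybRel k n g) (ι k j * ι k p)
      = RingQuot.mkAlgHom k (ybRel k n g) (ι k (g p) * ι k p) :=
    RingQuot.mkAlgHom_rel k ⟨j, p, rfl, rfl⟩
  have h2 : RingQuot.mkAlgHom k (ybRel k n g) (ι k (f p) * ι k p)
      = RingQuot.mkAlgHom k (ybRel k n g) (ι k (g p) * ι k p) :=
    RingQuot.mkAlgHom_rel k ⟨f p, p, rfl, rfl⟩
  rw [h1, h2]

def ybHom (k : Type*) [Field k] (n : ℕ) (f g : Equiv.Perm (Fin n)) :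
    YBA k n f →ₐ[k] YBA k n g :=
  RingQuot.liftAlgHom k ⟨RingQuot.mkAlgHom k (ybRel k n g), ybHom_resp k n f g⟩

lemma ybHom_comp (k : Type*) [Field k] (n : ℕ) (f g : Equiv.Perm (Fin n)) :
    (ybHom k n g f).comp (ybHom k n f g) = AlgHom.id k (YBA k n f) := by
  apply RingQuot.ringQuot_ext'
  ext x
  simp [ybHom, RingQuot.liftAlgHom_mkAlgHom_apply]

/-- for any two permutations `f`, `g` of `{x₁,…,xₙ}`, the Yang–Baxter
algebras `A(k,X,r_f)` and `A(k,X,r_g)` are isomorphic as `k`-algebras. -/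
theorem stmt_4 (k : Type*) [Field k] (n : ℕ) [NeZero n] (f g : Equiv.Perm (Fin n)) :
    Nonempty (YBA k n f ≃ₐ[k] YBA k n g) := by
  exact ⟨AlgEquiv.ofAlgHom (ybHom k n f g) (ybHom k n g f)
    (ybHom_comp k n g f) (ybHom_comp k n f g)⟩

end
end

section
/- Let (X, r) be a quadratic set with r ∘ r = r, writing r(x,y) = (ˣy, xʸ), and let S = S(X,r) be the associated monoid. (1) If r is left nondegenerate (each map y ↦ ˣy is bijective), then S has left cancellation on monomials of length 2: for all x,y,z ∈ X, if [x][y] = [x][z] in S then y = z. (2) If r is right nondegenerate (each map x ↦ xʸ is bijective), then for all x,y,z ∈ X, if [y][x] = [z][x] in S then y = z. -/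
/-- The congruence on the free monoid generated by the defining relations
`x y = ˣy ⬝ xʸ` of the monoid `S(X, r)` associated to a quadratic set `(X, r)`. -/
def qsCon {X : Type*} (r : X × X → X × X) : Con (FreeMonoid X) :=
  conGen fun a b =>
    ∃ x y : X, a = FreeMonoid.of x * FreeMonoid.of y ∧
      b = FreeMonoid.of (r (x, y)).1 * FreeMonoid.of (r (x, y)).2

/-!
For idempotent `r` the value `r (x, y)` is an invariant of the class of `x y` in `S(X, r)`:
a defining relation replaces a monomial `w` of length 2 by `r w`, and `r (r w) = r w`.
To see that it is well defined on all of `S(X, r)`, map `S(X, r)` onto the monoid of words of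
length at most 2 in which a word `x y` is recorded as `r (x, y)` and all longer words are
collapsed to one absorbing element. Cancellation then reduces to injectivity of `y ↦ ˣy` and
of `x ↦ xʸ`.
-/

inductive QuadTrunc {X : Type*} (r : X × X → X × X) where
  | one : QuadTrunc r
  | gen : X → QuadTrunc r
  | pair : X × X → QuadTrunc r
  | zero : QuadTrunc r

namespace QuadTrunc

variable {X : Type*} {r : X × X → X × X}

instance : Mul (QuadTrunc r) where
  mul
    | .one, b => b
    | a, .one => a
    | .gen x, .gen y => .pair (r (x, y))
    | _, _ => .zero

instance : Monoid (QuadTrunc r) where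
  one := .one
  one_mul a := by cases a <;> rfl
  mul_one a := by cases a <;> rfl
  mul_assoc a b c := by cases a <;> cases b <;> cases c <;> rfl

theorem gen_mul_gen (x y : X) : (gen x * gen y : QuadTrunc r) = pair (r (x, y)) := rfl

variable (r) in
def ofFreeMonoid : FreeMonoid X →* QuadTrunc r := FreeMonoid.lift gen

theorem ofFreeMonoid_of_mul_of (x y : X) :
    ofFreeMonoid r (.of x * .of y) = pair (r (x, y)) := by
  rw [map_mul, ofFreeMonoid, FreeMonoid.lift_eval_of, FreeMonoid.lift_eval_of, gen_mul_gen]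

theorem qsCon_le_ker_ofFreeMonoid (hr : r ∘ r = r) : qsCon r ≤ Con.ker (ofFreeMonoid r) := by
  refine Con.conGen_le.mpr ?_
  rintro _ _ ⟨x, y, rfl, rfl⟩
  change ofFreeMonoid r _ = ofFreeMonoid r _
  rw [ofFreeMonoid_of_mul_of, ofFreeMonoid_of_mul_of, Prod.mk.eta]
  exact congrArg pair (congrFun hr (x, y)).symm

end QuadTrunc

theorem qsCon_apply_eq_of_mk'_eq {X : Type*} {r : X × X → X × X} (hr : r ∘ r = r)
    {x y x' y' : X}
    (h : (qsCon r).mk' (.of x * .of y) = (qsCon r).mk' (.of x' * .of y')) :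
    r (x, y) = r (x', y') := by
  have hker := QuadTrunc.qsCon_le_ker_ofFreeMonoid hr ((Con.eq _).mp h)
  rw [Con.ker_rel, QuadTrunc.ofFreeMonoid_of_mul_of, QuadTrunc.ofFreeMonoid_of_mul_of] at hker
  exact QuadTrunc.pair.inj hker

/-- if `(X,r)` is an idempotent quadratic set, then left (resp. right)
nondegeneracy implies left (resp. right) cancellation in `S(X,r)` on monomials of
length 2. -/
theorem stmt_5 {X : Type*} (r : X × X → X × X) (hidem : r ∘ r = r) :
    ((∀ x : X, Function.Bijective fun y : X => (r (x, y)).1) →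
      ∀ x y z : X,
        (qsCon r).mk' (FreeMonoid.of x * FreeMonoid.of y) =
          (qsCon r).mk' (FreeMonoid.of x * FreeMonoid.of z) → y = z) ∧
    ((∀ y : X, Function.Bijective fun x : X => (r (x, y)).2) →
      ∀ x y z : X,
        (qsCon r).mk' (FreeMonoid.of y * FreeMonoid.of x) =
          (qsCon r).mk' (FreeMonoid.of z * FreeMonoid.of x) → y = z) := by
  constructor
  · intro hleft x y z h
    exact (hleft x).injective (congrArg Prod.fst (qsCon_apply_eq_of_mk'_eq hidem h))
  · intro hright x y z h
    exact (hright x).injective (congrArg Prod.snd (qsCon_apply_eq_of_mk'_eq hidem h))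
end

section
/- Let (X, r) be a finite left nondegenerate idempotent set-theoretic solution of the Yang–Baxter equation with |X| = n, let x₁,…,x_n be an enumeration of X, and let A = A(k,X,r) be its Yang–Baxter algebra over a field k. Then the n elements [x₁ x₁], [x₁ x₂], …, [x₁ x_n] (images in A of the length-2 words x₁ x_j) are linearly independent over k; consequently the image in A of the span of the length-2 words has dimension at least n (i.e. dim A₂ ≥ n). -/
/-!
Because `r` is idempotent, the relations `x y = r(x, y)` only identify length-2 words with
the same image under `r`. Hence `A(k, X, r)` maps to the monoid algebra of the monoid
`{1} ∪ X ∪ r(X × X) ∪ {0}`, where `x · y = r(x, y)` and all products of three generators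
vanish, and `[x y] ↦ r(x, y)` there. Left nondegeneracy makes `j ↦ r(x₁, x_j)` injective,
so the images of the `[x₁ x_j]` are distinct basis vectors.
-/

noncomputable section

open FreeAlgebra

/-- The defining relations of the Yang–Baxter algebra `A(k, X, r)` of a quadratic set
`(X, r)` with `X = Fin n`. -/
def qaRel (k : Type*) [Field k] (n : ℕ) (r : Fin n × Fin n → Fin n × Fin n) :
    FreeAlgebra k (Fin n) → FreeAlgebra k (Fin n) → Prop :=
  fun a b => ∃ x y : Fin n,
    a = ι k x * ι k y ∧ b = ι k (r (x, y)).1 * ι k (r (x, y)).2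

/-- `r¹² = r × id` on `X × X × X`. -/
def r12 {X : Type*} (r : X × X → X × X) : X × X × X → X × X × X :=
  fun t => ((r (t.1, t.2.1)).1, (r (t.1, t.2.1)).2, t.2.2)

/-- `r²³ = id × r` on `X × X × X`. -/
def r23 {X : Type*} (r : X × X → X × X) : X × X × X → X × X × X :=
  fun t => (t.1, r (t.2.1, t.2.2))

namespace YangBaxter

/-- `quad p` is the class of the words `x y` with `r (x, y) = p`; `zero` absorbs all words of
length at least three. -/
inductive TruncMonoid (X : Type*) (r : X × X → X × X)
  | one : TruncMonoid X r
  | gen : X → TruncMonoid X r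
  | quad : X × X → TruncMonoid X r
  | zero : TruncMonoid X r

namespace TruncMonoid

variable {X : Type*} {r : X × X → X × X}

def mul : TruncMonoid X r → TruncMonoid X r → TruncMonoid X r
  | one, a => a
  | gen x, one => gen x
  | quad p, one => quad p
  | zero, one => zero
  | gen x, gen y => quad (r (x, y))
  | _, _ => zero

instance : Monoid (TruncMonoid X r) where
  mul := mul
  one := one
  one_mul a := by cases a <;> rfl
  mul_one a := by cases a <;> rfl
  mul_assoc a b c := by cases a <;> cases b <;> cases c <;> rfl

theorem gen_mul_gen (x y : X) : (gen x * gen y : TruncMonoid X r) = quad (r (x, y)) := rfl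

theorem quad_injective : Function.Injective (quad : X × X → TruncMonoid X r) :=
  fun _ _ h => by injection h

end TruncMonoid

open TruncMonoid

variable (k : Type*) [Field k] {n : ℕ} (r : Fin n × Fin n → Fin n × Fin n)

def freeToTrunc : FreeAlgebra k (Fin n) →ₐ[k] MonoidAlgebra k (TruncMonoid (Fin n) r) :=
  FreeAlgebra.lift k fun x => MonoidAlgebra.of k _ (gen x)

theorem freeToTrunc_ι_mul_ι (x y : Fin n) :
    freeToTrunc k r (ι k x * ι k y) = MonoidAlgebra.of k _ (quad (r (x, y))) := by
  rw [freeToTrunc, map_mul, lift_ι_apply, lift_ι_apply, ← map_mul, gen_mul_gen]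

variable {r}

theorem freeToTrunc_respects_qaRel (hidem : r ∘ r = r) ⦃a b : FreeAlgebra k (Fin n)⦄
    (h : qaRel k n r a b) : freeToTrunc k r a = freeToTrunc k r b := by
  obtain ⟨x, y, rfl, rfl⟩ := h
  rw [freeToTrunc_ι_mul_ι, freeToTrunc_ι_mul_ι, Prod.mk.eta,
    show r (r (x, y)) = r (x, y) from congrFun hidem (x, y)]

def ybToTrunc (hidem : r ∘ r = r) :
    RingQuot (qaRel k n r) →ₐ[k] MonoidAlgebra k (TruncMonoid (Fin n) r) :=
  RingQuot.liftAlgHom k ⟨freeToTrunc k r, freeToTrunc_respects_qaRel k hidem⟩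

theorem ybToTrunc_mk_ι_mul_ι (hidem : r ∘ r = r) (x y : Fin n) :
    ybToTrunc k hidem (RingQuot.mkAlgHom k (qaRel k n r) (ι k x * ι k y)) =
      MonoidAlgebra.of k _ (quad (r (x, y))) := by
  rw [ybToTrunc, RingQuot.liftAlgHom_mkAlgHom_apply, freeToTrunc_ι_mul_ι]

theorem linearIndependent_mk_ι_mul_ι {I : Type*} (hidem : r ∘ r = r) (p : I → Fin n × Fin n)
    (hp : Function.Injective (r ∘ p)) :
    LinearIndependent k
      fun i => RingQuot.mkAlgHom k (qaRel k n r) (ι k (p i).1 * ι k (p i).2) := by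
  apply LinearIndependent.of_comp (ybToTrunc k hidem).toLinearMap
  have hcomp : (ybToTrunc k hidem).toLinearMap ∘
      (fun i => RingQuot.mkAlgHom k (qaRel k n r) (ι k (p i).1 * ι k (p i).2)) =
      MonoidAlgebra.basis (TruncMonoid (Fin n) r) k ∘ quad ∘ r ∘ p := by
    ext1 i
    exact ybToTrunc_mk_ι_mul_ι k hidem _ _
  rw [hcomp]
  exact (MonoidAlgebra.basis _ k).linearIndependent.comp _ (quad_injective.comp hp)

end YangBaxter

open YangBaxter

theorem stmt_6_general (k : Type*) [Field k] (n : ℕ) [NeZero n]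
    (r : Fin n × Fin n → Fin n × Fin n)
    (hld : ∀ x : Fin n, Function.Bijective fun y : Fin n => (r (x, y)).1)
    (hidem : r ∘ r = r) :
    LinearIndependent k
      (fun j : Fin n => RingQuot.mkAlgHom k (qaRel k n r) (ι k 0 * ι k j)) ∧
    (n : Cardinal) ≤
      Module.rank k
        ↥(Submodule.span k
          {a : RingQuot (qaRel k n r) |
            ∃ y z : Fin n, a = RingQuot.mkAlgHom k (qaRel k n r) (ι k y * ι k z)}) := by
  let v : Fin n → RingQuot (qaRel k n r) := fun j => RingQuot.mkAlgHom k _ (ι k 0 * ι k j)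
  have hinj : Function.Injective (r ∘ fun j : Fin n => ((0 : Fin n), j)) :=
    fun i j h => (hld 0).injective (congrArg Prod.fst h)
  have hli : LinearIndependent k v := linearIndependent_mk_ι_mul_ι k hidem (fun j => (0, j)) hinj
  refine ⟨hli, ?_⟩
  calc (n : Cardinal) = Cardinal.mk (Set.range v) := by
        simpa using (Cardinal.mk_range_eq_of_injective hli.injective).symm
    _ = Module.rank k (Submodule.span k (Set.range v)) := (rank_span hli).symm
    _ ≤ _ := Submodule.rank_mono <| Submodule.span_mono <|
        Set.range_subset_iff.2 fun j => Set.mem_ofPred.2 ⟨0, j, rfl⟩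

/-- for a finite left nondegenerate idempotent set-theoretic solution
`(X, r)` with `X = {x₁,…,xₙ}`, the images `[x₁ x_j]`, `1 ≤ j ≤ n`, are linearly
independent in `A(k,X,r)`; consequently the image of the span of the length-2 words
has dimension at least `n`. -/
theorem stmt_6 (k : Type*) [Field k] (n : ℕ) [NeZero n]
    (r : Fin n × Fin n → Fin n × Fin n)
    (hld : ∀ x : Fin n, Function.Bijective fun y : Fin n => (r (x, y)).1)
    (hidem : r ∘ r = r)
    (hbraid : r12 r ∘ r23 r ∘ r12 r = r23 r ∘ r12 r ∘ r23 r) :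
    LinearIndependent k
      (fun j : Fin n => RingQuot.mkAlgHom k (qaRel k n r) (ι k 0 * ι k j)) ∧
    (n : Cardinal) ≤
      Module.rank k
        ↥(Submodule.span k
          {a : RingQuot (qaRel k n r) |
            ∃ y z : Fin n, a = RingQuot.mkAlgHom k (qaRel k n r) (ι k y * ι k z)}) :=
  stmt_6_general k n r hld hidem

end
end

section
/- Let k be a field and A = k⟨x₁,…,x_n⟩/I a quadratic algebra, where I is the two-sided ideal generated by a set R of homogeneous quadratic elements Σ_{i,j} r_{ij} x_i x_j (coefficients r_{ij} ∈ k). Let ρ : A → M_n(A) be a k-algebra homomorphism into n×n matrices over A such that for every relation Σ_{i,j} r_{ij} x_i x_j ∈ R and every index k one has Σ_{i,j} r_{ij}( ρ(x_j)_{ik} + x_i δ_{jk} ) = 0 in A. Then: (1) the free left A-module Ω¹ = A^n with standard left basis e₁,…,e_n becomes an A-bimodule under the right action (a e_i)·b := Σ_k (a ρ(b)_{ik}) e_k, i.e. this right action is a well-defined associative right A-action commuting with the left A-action; (2) there exists a k-linear map d : A → Ω¹ with d(1) = 0, d(x_i) = e_i for all i, and d(ab) = (da)·b + a·(db) for all a,b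 ∈ A, making (Ω¹, d) a first order differential calculus on A; (3) defining ∂_i : A → A by da = Σ_i (∂_i a) e_i, the maps ∂_i satisfy ∂_i(ab) = Σ_j ∂_j(a) ρ(b)_{ji} + a ∂_i(b) for all a,b ∈ A. -/
noncomputable section

open FreeAlgebra

/-- The relation presenting a quadratic algebra `A = k⟨x₁,…,xₙ⟩/(R)` where each
element of `R` is determined by a coefficient matrix `c` via `Σ_{i,j} c i j x_i x_j`. -/
def quadRel (k : Type*) [Field k] (n : ℕ) (R : Set (Fin n → Fin n → k)) :
    FreeAlgebra k (Fin n) → FreeAlgebra k (Fin n) → Prop :=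
  fun a b => (∃ c ∈ R, a = ∑ i, ∑ j, c i j • (ι k i * ι k j)) ∧ b = 0

/-- The quadratic algebra presented by the coefficient set `R`. -/
abbrev QuadAlg (k : Type*) [Field k] (n : ℕ) (R : Set (Fin n → Fin n → k)) :=
  RingQuot (quadRel k n R)

/-- The image of the generator `x_i` in the quadratic algebra. -/
def qx (k : Type*) [Field k] (n : ℕ) (R : Set (Fin n → Fin n → k)) (i : Fin n) :
    QuadAlg k n R :=
  RingQuot.mkAlgHom k (quadRel k n R) (ι k i)

/-- The right action of `A` on the free left `A`-module `Ω¹ = Aⁿ` determined by the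
matrix-valued algebra map `ρ`: `(e_i)·b = Σ_k ρ(b)_{i k} e_k`. -/
def raAct (k : Type*) [Field k] (n : ℕ) (R : Set (Fin n → Fin n → k))
    (ρ : QuadAlg k n R →ₐ[k] Matrix (Fin n) (Fin n) (QuadAlg k n R))
    (v : Fin n → QuadAlg k n R) (b : QuadAlg k n R) : Fin n → QuadAlg k n R :=
  fun l => ∑ i, v i * ρ b i l


/-!
The Leibniz rule says exactly that `a ↦ a + d a` is an algebra map from `A` into the
square-zero extension `A ⊕ Ω¹`, where `Ω¹ = Aⁿ` carries the right action `v • b = v ρ(b)`.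
So it suffices to send each generator `x_i` to `x_i + e_i` and check the relations: for a
relation `Σ r_{ij} x_i x_j` the `Ω¹`-component of `Σ r_{ij} (x_i + e_i)(x_j + e_j)` is
`Σ r_{ij} (x_i e_j + e_i ρ(x_j))`, whose `k`-th coordinate is the hypothesis on `ρ`.
-/

namespace QuadAlg

variable {k : Type*} [Field k] {n : ℕ} {R : Set (Fin n → Fin n → k)}

theorem sum_smul_qx_mul_qx {c : Fin n → Fin n → k} (hc : c ∈ R) :
    ∑ i, ∑ j, c i j • (qx k n R i * qx k n R j) = 0 := by
  simpa [qx] using RingQuot.mkAlgHom_rel k (s := quadRel k n R) ⟨⟨c, hc, rfl⟩, rfl⟩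

variable {B : Type*} [Semiring B] [Algebra k B]

def lift (f : Fin n → B) (hf : ∀ c ∈ R, ∑ i, ∑ j, c i j • (f i * f j) = 0) :
    QuadAlg k n R →ₐ[k] B :=
  RingQuot.liftAlgHom k ⟨FreeAlgebra.lift k f, by
    rintro _ _ ⟨⟨c, hc, rfl⟩, rfl⟩
    simpa using hf c hc⟩

@[simp]
theorem lift_qx (f : Fin n → B) (hf : ∀ c ∈ R, ∑ i, ∑ j, c i j • (f i * f j) = 0)
    (i : Fin n) :
    lift f hf (qx k n R i) = f i := by
  simp [lift, qx]

theorem algHom_ext {f g : QuadAlg k n R →ₐ[k] B} (h : ∀ i, f (qx k n R i) = g (qx k n R i)) :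
    f = g :=
  RingQuot.ringQuot_ext' k _ _ (FreeAlgebra.hom_ext (funext h))

end QuadAlg

section TwistedBimodule

open Matrix

variable {k A m : Type*} [CommSemiring k] [Semiring A] [Algebra k A] [Fintype m] [DecidableEq m]

/-- `Ω¹ = Aᵐ` with right action `v • b = v ᵥ* ρ b`. A type synonym, since `m → A` already
carries the coordinatewise `Aᵐᵒᵖ`-action. -/
def TwistedFree (_ρ : A →ₐ[k] Matrix m m A) : Type _ := m → A

variable (ρ : A →ₐ[k] Matrix m m A)

instance : AddCommMonoid (TwistedFree ρ) := inferInstanceAs (AddCommMonoid (m → A))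

instance : Module A (TwistedFree ρ) := inferInstanceAs (Module A (m → A))

instance : Module k (TwistedFree ρ) := inferInstanceAs (Module k (m → A))

instance : IsScalarTower k A (TwistedFree ρ) := inferInstanceAs (IsScalarTower k A (m → A))

instance : Module Aᵐᵒᵖ (TwistedFree ρ) where
  smul b (v : m → A) := v ᵥ* ρ b.unop
  one_smul (v : m → A) := by
    change v ᵥ* ρ 1 = v
    rw [map_one, vecMul_one]
  mul_smul a b (v : m → A) := by
    change v ᵥ* ρ (b.unop * a.unop) = (v ᵥ* ρ b.unop) ᵥ* ρ a.unop
    rw [map_mul, vecMul_vecMul]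
  smul_zero b := zero_vecMul _
  smul_add b (v w : m → A) := add_vecMul _ v w
  add_smul a b (v : m → A) := by
    change v ᵥ* ρ (a.unop + b.unop) = v ᵥ* ρ a.unop + v ᵥ* ρ b.unop
    rw [map_add, vecMul_add]
  zero_smul (v : m → A) := by
    change v ᵥ* ρ 0 = 0
    rw [map_zero, vecMul_zero]

instance : SMulCommClass A Aᵐᵒᵖ (TwistedFree ρ) where
  smul_comm a b (v : m → A) := (smul_vecMul a v (ρ b.unop)).symm

instance : IsScalarTower k Aᵐᵒᵖ (TwistedFree ρ) where
  smul_assoc c b (v : m → A) := by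
    change v ᵥ* ρ (c • b.unop) = c • v ᵥ* ρ b.unop
    rw [map_smul, vecMul_smul]

namespace TwistedFree

def basis (i : m) : TwistedFree ρ := Pi.single i 1

theorem op_smul_basis (b : A) (i : m) : MulOpposite.op b • basis ρ i = (ρ b).row i :=
  single_one_vecMul i (ρ b)

end TwistedFree

end TwistedBimodule

section SquareZeroSection

open TrivSqZeroExt

variable {k A M : Type*} [CommSemiring k] [Semiring A] [Algebra k A] [AddCommMonoid M]
  [Module A M] [Module Aᵐᵒᵖ M] [Module k M] [SMulCommClass A Aᵐᵒᵖ M]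
  [IsScalarTower k A M] [IsScalarTower k Aᵐᵒᵖ M]

def sndLinearMap (φ : A →ₐ[k] TrivSqZeroExt A M) : A →ₗ[k] M where
  toFun a := (φ a).snd
  map_add' a b := by rw [map_add, snd_add]
  map_smul' c a := by rw [map_smul, snd_smul]; rfl

theorem sndLinearMap_one (φ : A →ₐ[k] TrivSqZeroExt A M) : sndLinearMap φ 1 = 0 := by
  simp [sndLinearMap]

theorem sndLinearMap_mul {φ : A →ₐ[k] TrivSqZeroExt A M} (hφ : ∀ a, (φ a).fst = a)
    (a b : A) :
    sndLinearMap φ (a * b) = a • sndLinearMap φ b + MulOpposite.op b • sndLinearMap φ a := by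
  simp only [sndLinearMap, LinearMap.coe_mk, AddHom.coe_mk, map_mul, snd_mul, hφ]

end SquareZeroSection

theorem span_mul_apply_eq_top_of_eq_single {k A m : Type*} [CommSemiring k] [Semiring A]
    [Module k A] [Fintype m] [DecidableEq m] (d : A → m → A) (x : m → A)
    (hx : ∀ j, d (x j) = Pi.single j 1) :
    Submodule.span k {w : m → A | ∃ a b : A, w = fun i => a * d b i} = ⊤ := by
  refine eq_top_iff.2 fun w _ => ?_
  rw [← Finset.univ_sum_single w]
  refine Submodule.sum_mem _ fun j _ => Submodule.subset_span ⟨w j, x j, ?_⟩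
  ext i
  simp [hx, Pi.single_apply]

namespace QuadAlg

open TrivSqZeroExt

variable {k : Type*} [Field k] {n : ℕ} {R : Set (Fin n → Fin n → k)}
  (ρ : QuadAlg k n R →ₐ[k] Matrix (Fin n) (Fin n) (QuadAlg k n R))

theorem sum_smul_qx_add_basis_mul_eq_zero {c : Fin n → Fin n → k} (hc : c ∈ R)
    (hρc : ∀ l : Fin n,
      (∑ i, ∑ j, c i j • (ρ (qx k n R j) i l + if j = l then qx k n R i else 0)) = 0) :
    ∑ i, ∑ j, c i j • ((inl (qx k n R i) + inr (TwistedFree.basis ρ i)) *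
      (inl (qx k n R j) + inr (TwistedFree.basis ρ j))) = 0 := by
  ext : 1
  · simpa only [fst_sum, fst_smul, fst_mul, fst_add, fst_inl, fst_inr, add_zero, fst_zero]
      using sum_smul_qx_mul_qx hc
  · simp only [snd_sum, snd_smul, snd_mul, fst_add, snd_add, fst_inl, fst_inr, snd_inl, snd_inr,
      add_zero, zero_add, snd_zero, TwistedFree.op_smul_basis]
    change ∑ i, ∑ j, c i j • (qx k n R i • (Pi.single j 1 : Fin n → QuadAlg k n R) +
      (ρ (qx k n R j)).row i) = 0
    ext l
    simpa [Pi.single_apply, eq_comm, add_comm] using hρc l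

variable (hρ : ∀ c ∈ R, ∀ l : Fin n,
      (∑ i, ∑ j, c i j • (ρ (qx k n R j) i l + if j = l then qx k n R i else 0)) = 0)

def withDifferential : QuadAlg k n R →ₐ[k] TrivSqZeroExt (QuadAlg k n R) (TwistedFree ρ) :=
  lift (fun i => inl (qx k n R i) + inr (TwistedFree.basis ρ i))
    fun c hc => sum_smul_qx_add_basis_mul_eq_zero ρ hc (hρ c hc)

theorem fst_withDifferential (a : QuadAlg k n R) : (withDifferential ρ hρ a).fst = a := by
  have hsection : (fstHom k _ _).comp (withDifferential ρ hρ) = AlgHom.id k (QuadAlg k n R) :=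
    algHom_ext fun i => by simp [withDifferential]
  exact DFunLike.congr_fun hsection a

def differential : QuadAlg k n R →ₗ[k] TwistedFree ρ := sndLinearMap (withDifferential ρ hρ)

theorem differential_one : differential ρ hρ 1 = 0 := sndLinearMap_one _

theorem differential_qx (i : Fin n) :
    differential ρ hρ (qx k n R i) = TwistedFree.basis ρ i := by
  simp [differential, sndLinearMap, withDifferential]

theorem differential_mul (a b : QuadAlg k n R) :
    differential ρ hρ (a * b) =
      a • differential ρ hρ b + MulOpposite.op b • differential ρ hρ a :=
  sndLinearMap_mul (fst_withDifferential ρ hρ) a b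

end QuadAlg

/-- given a quadratic algebra `A = k⟨x₁,…,xₙ⟩/(R)` and an algebra map
`ρ : A → Mₙ(A)` with `Σ_{i,j} r_{ij}(ρ(x_j)_{ik} + x_i δ_{jk}) = 0` for each relation,
(1) `Ω¹ = Aⁿ` is an `A`-bimodule for the right action `(a e_i)·b = Σ_k a ρ(b)_{ik} e_k`;
(2) there is a first order differential calculus `d : A → Ω¹` with `d 1 = 0`,
`d x_i = e_i` and the Leibniz rule; (3) the partial derivatives `∂_i a = (d a)_i`
satisfy the twisted derivation rule. -/
theorem stmt_7 (k : Type*) [Field k] (n : ℕ) (R : Set (Fin n → Fin n → k))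
    (ρ : QuadAlg k n R →ₐ[k] Matrix (Fin n) (Fin n) (QuadAlg k n R))
    (hρ : ∀ c ∈ R, ∀ l : Fin n,
      (∑ i, ∑ j, c i j •
        (ρ (qx k n R j) i l + if j = l then qx k n R i else 0)) = 0) :
    -- (1) the right action makes the free left module `Aⁿ` an `A`-bimodule
    (∀ v : Fin n → QuadAlg k n R, raAct k n R ρ v 1 = v) ∧
    (∀ (v : Fin n → QuadAlg k n R) (a b : QuadAlg k n R),
      raAct k n R ρ (raAct k n R ρ v a) b = raAct k n R ρ v (a * b)) ∧
    (∀ (a : QuadAlg k n R) (v : Fin n → QuadAlg k n R) (b : QuadAlg k n R),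
      raAct k n R ρ (fun i => a * v i) b = fun l => a * raAct k n R ρ v b l) ∧
    -- (2) and (3): existence of the differential and the partial derivatives
    (∃ d : QuadAlg k n R →ₗ[k] (Fin n → QuadAlg k n R),
      d 1 = 0 ∧
      (∀ i : Fin n, d (qx k n R i) = Pi.single i 1) ∧
      (∀ a b : QuadAlg k n R,
        d (a * b) = raAct k n R ρ (d a) b + fun i => a * d b i) ∧
      Submodule.span k
        {w : Fin n → QuadAlg k n R |
          ∃ a b : QuadAlg k n R, w = fun i => a * d b i} = ⊤ ∧
      (∀ (a b : QuadAlg k n R) (i : Fin n),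
        d (a * b) i = (∑ j, d a j * ρ b j i) + a * d b i)) := by
  have leibniz (a b : QuadAlg k n R) : QuadAlg.differential ρ hρ (a * b) =
      raAct k n R ρ (QuadAlg.differential ρ hρ a) b +
        fun i => a * QuadAlg.differential ρ hρ b i :=
    (QuadAlg.differential_mul ρ hρ a b).trans (add_comm _ _)
  -- `raAct` is definitionally the `Aᵐᵒᵖ`-action on `TwistedFree ρ`, so (1) is the bimodule
  -- axioms.
  refine ⟨fun (v : TwistedFree ρ) => one_smul (QuadAlg k n R)ᵐᵒᵖ v,
    fun (v : TwistedFree ρ) a b => (mul_smul (MulOpposite.op b) (MulOpposite.op a) v).symm,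
    fun a (v : TwistedFree ρ) b => (smul_comm a (MulOpposite.op b) v).symm,
    QuadAlg.differential ρ hρ, QuadAlg.differential_one ρ hρ, QuadAlg.differential_qx ρ hρ,
    leibniz,
    span_mul_apply_eq_top_of_eq_single _ _ (QuadAlg.differential_qx ρ hρ),
    fun a b i => congrFun (leibniz a b) i⟩

end
end

section
/- Let k be a field, n ≥ 1, f a permutation of {1,…,n}, and A = A(k,X,r_f). Let R = k[x₁] denote the subalgebra of A generated by x₁. Then R is isomorphic to the polynomial algebra k[t] in one variable, and A is a free left R-module of rank n with free basis {1, x₂, x₃, …, x_n}. -/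
noncomputable section

open FreeAlgebra

/-!
Indices start at `0`, so the paper's `x₁` is `xgen k n f 0`.

The relations say that `x_j x_p` does not depend on `j`, so every nonempty word equals
`x₀ ^ m * x_p` for a unique pair `(m, p)`, and these normal forms multiply by
`(x₀ ^ m x_p) (x₀ ^ l x_q) = x₀ ^ (m + l + 1) x_q`. Hence `A` is the monoid algebra of the monoid
of normal forms. In that monoid the elements `x₀ ^ m * v_p`, with `v₀ = 1` and `v_p = x_p`
otherwise, run exactly once over all normal forms; so they are a `k`-basis of `A`, which says
both that `x₀` is transcendental and that `{v_p}` is a free basis over `k[x₀]`.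
-/

open Polynomial

theorem MonoidAlgebra.bijective_sum_aeval_of_mul_of {k G ι : Type*} [CommSemiring k] [Monoid G]
    [Fintype ι] (a : G) (v : ι → G) (hv : Function.Bijective fun x : ι × ℕ => a ^ x.2 * v x.1) :
    Function.Bijective fun g : ι → k[X] => ∑ i, aeval (of k G a) (g i) * of k G (v i) := by
  classical
  let Φ : (ι → k[X]) →ₗ[k] MonoidAlgebra k G :=
    ∑ i, LinearMap.mulRight k (of k G (v i)) ∘ₗ (aeval (of k G a)).toLinearMap ∘ₗ
      LinearMap.proj i
  let b : Module.Basis (Σ _ : ι, ℕ) k (ι → k[X]) := Pi.basis fun _ => basisMonomials k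
  let e : (Σ _ : ι, ℕ) ≃ G := (Equiv.sigmaEquivProd ι ℕ).trans (Equiv.ofBijective _ hv)
  -- `Φ` maps the monomial basis `Pi.single i (X ^ m)` onto the basis `single (a ^ m * v i) 1`.
  have hΦ : Φ = (b.equiv (MonoidAlgebra.basis G k) e : (ι → k[X]) →ₗ[k] MonoidAlgebra k G) := by
    refine b.ext fun ⟨i, m⟩ => ?_
    rw [LinearEquiv.coe_coe, Module.Basis.equiv_apply]
    simp [Φ, b, e, Pi.single_apply, apply_ite (aeval _), ite_mul, MonoidAlgebra.single_pow]
  convert (b.equiv (MonoidAlgebra.basis G k) e).bijective using 1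
  rw [← LinearEquiv.coe_coe, ← hΦ]
  ext g
  simp [Φ]

/-- `⟨m, p⟩` encodes the word `x₀ ^ m * x_p`. -/
structure PosNormalWord (n : ℕ) where
  exp : ℕ
  last : Fin n

namespace PosNormalWord

variable {n : ℕ}

instance : Mul (PosNormalWord n) where
  mul a b := ⟨a.exp + b.exp + 1, b.last⟩

theorem mk_mul_mk (m l : ℕ) (p q : Fin n) :
    (⟨m, p⟩ * ⟨l, q⟩ : PosNormalWord n) = ⟨m + l + 1, q⟩ :=
  rfl

instance : Semigroup (PosNormalWord n) where
  mul_assoc := by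
    rintro ⟨a, p⟩ ⟨b, q⟩ ⟨c, r⟩
    simp only [mk_mul_mk, mk.injEq, and_true]
    omega

end PosNormalWord

/-- Normal forms of the words in the generators `x_i` under the relations `x_j x_p = x₀ x_p`. -/
abbrev NormalWord (n : ℕ) : Type := WithOne (PosNormalWord n)

namespace NormalWord

variable {n : ℕ}

def gen (i : Fin n) : NormalWord n := ↑(⟨0, i⟩ : PosNormalWord n)

theorem gen_pow_mul_coe (i : Fin n) (m : ℕ) (w : PosNormalWord n) :
    gen i ^ m * ↑w = ↑(⟨m + w.exp, w.last⟩ : PosNormalWord n) := by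
  induction m with
  | zero => simp
  | succ m ih =>
    rw [pow_succ', mul_assoc, ih, gen, ← WithOne.coe_mul, PosNormalWord.mk_mul_mk]
    congr 2
    omega

theorem gen_pow_mul_gen (i j : Fin n) (m : ℕ) :
    gen i ^ m * gen j = ↑(⟨m, j⟩ : PosNormalWord n) :=
  gen_pow_mul_coe i m _

theorem gen_pow_succ (i : Fin n) (m : ℕ) : gen i ^ (m + 1) = ↑(⟨m, i⟩ : PosNormalWord n) := by
  rw [pow_succ, gen_pow_mul_gen]

variable [NeZero n]

def toIndex : NormalWord n → Fin n × ℕ :=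
  WithOne.recOneCoe (0, 0) fun w => if w.last = 0 then (0, w.exp + 1) else (w.last, w.exp)

theorem bijective_pow_mul :
    Function.Bijective fun x : Fin n × ℕ => gen 0 ^ x.2 * if x.1 = 0 then 1 else gen x.1 := by
  refine Function.bijective_iff_has_inverse.mpr ⟨toIndex, ?_, ?_⟩
  · rintro ⟨p, m⟩
    by_cases hp : p = 0
    · rcases m with _ | m <;> simp [toIndex, hp, gen_pow_succ]
    · simp [toIndex, hp, gen_pow_mul_gen]
  · intro w
    induction w using WithOne.recOneCoe with
    | one => simp [toIndex]
    | coe w =>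
      obtain ⟨m, p⟩ := w
      by_cases hp : p = 0
      · subst hp
        simp [toIndex, gen_pow_succ]
      · simp [toIndex, hp, gen_pow_mul_gen]

section lift

variable {M : Type*} [Monoid M] {x : Fin n → M}

theorem mul_pow_mul_of_mul_eq (hx : ∀ j p, x j * x p = x 0 * x p) (p q : Fin n) (l : ℕ) :
    x p * (x 0 ^ l * x q) = x 0 ^ (l + 1) * x q := by
  cases l with
  | zero => simp [hx p q]
  | succ l =>
    calc x p * (x 0 ^ (l + 1) * x q) = x p * x 0 * (x 0 ^ l * x q) := by
          simp only [pow_succ', mul_assoc]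
      _ = x 0 * x 0 * (x 0 ^ l * x q) := by rw [hx]
      _ = x 0 ^ (l + 2) * x q := by simp only [pow_succ', mul_assoc]

def lift (x : Fin n → M) (hx : ∀ j p, x j * x p = x 0 * x p) : NormalWord n →* M :=
  WithOne.lift
    { toFun w := x 0 ^ w.exp * x w.last
      map_mul' := by
        rintro ⟨m, p⟩ ⟨l, q⟩
        show x 0 ^ (m + l + 1) * x q = x 0 ^ m * x p * (x 0 ^ l * x q)
        rw [mul_assoc, mul_pow_mul_of_mul_eq hx, ← mul_assoc, ← pow_add, add_assoc] }

theorem lift_gen (hx : ∀ j p, x j * x p = x 0 * x p) (i : Fin n) : lift x hx (gen i) = x i := by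
  simp [lift, gen]

end lift

end NormalWord

namespace YBA

variable (k : Type*) [Field k] (n : ℕ) (f : Equiv.Perm (Fin n))

theorem xgen_mul_xgen (j p : Fin n) :
    xgen k n f j * xgen k n f p = xgen k n f (f p) * xgen k n f p := by
  simp only [xgen, ← map_mul]
  exact RingQuot.mkAlgHom_rel k ⟨j, p, rfl, rfl⟩

theorem xgen_mul_xgen_eq (j j' p : Fin n) :
    xgen k n f j * xgen k n f p = xgen k n f j' * xgen k n f p := by
  rw [xgen_mul_xgen k n f j, xgen_mul_xgen k n f j']

def toNormalWordAlgebra : YBA k n f →ₐ[k] MonoidAlgebra k (NormalWord n) :=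
  RingQuot.liftAlgHom k ⟨FreeAlgebra.lift k fun i => MonoidAlgebra.of k _ (NormalWord.gen i), by
    rintro _ _ ⟨j, p, rfl, rfl⟩
    simp only [map_mul, FreeAlgebra.lift_ι_apply]
    rw [← map_mul, ← map_mul]
    -- both products are the normal word `⟨1, p⟩`
    rfl⟩

theorem toNormalWordAlgebra_xgen (i : Fin n) :
    toNormalWordAlgebra k n f (xgen k n f i) = MonoidAlgebra.of k _ (NormalWord.gen i) := by
  rw [xgen, toNormalWordAlgebra, RingQuot.liftAlgHom_mkAlgHom_apply, FreeAlgebra.lift_ι_apply]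

variable [NeZero n]

def ofNormalWordAlgebra : MonoidAlgebra k (NormalWord n) →ₐ[k] YBA k n f :=
  MonoidAlgebra.lift k (YBA k n f) (NormalWord n)
    (NormalWord.lift (xgen k n f) fun j p => xgen_mul_xgen_eq k n f j 0 p)

def equivNormalWordAlgebra : YBA k n f ≃ₐ[k] MonoidAlgebra k (NormalWord n) :=
  AlgEquiv.ofAlgHom (toNormalWordAlgebra k n f) (ofNormalWordAlgebra k n f)
    (by
      refine MonoidAlgebra.algHom_ext (fun w => ?_) (Subsingleton.elim _ _)
      induction w using WithOne.recOneCoe with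
      | one => simp [← MonoidAlgebra.one_def]
      | coe w =>
        obtain ⟨m, p⟩ := w
        simp only [AlgHom.comp_apply, ofNormalWordAlgebra, MonoidAlgebra.lift_single, one_smul]
        change toNormalWordAlgebra k n f (xgen k n f 0 ^ m * xgen k n f p) = _
        rw [map_mul, map_pow, toNormalWordAlgebra_xgen, toNormalWordAlgebra_xgen, ← map_pow,
          ← map_mul, NormalWord.gen_pow_mul_gen]
        rfl)
    (by
      refine RingQuot.ringQuot_ext' _ _ _ (FreeAlgebra.hom_ext (funext fun i => ?_))
      change ofNormalWordAlgebra k n f (toNormalWordAlgebra k n f (xgen k n f i)) = xgen k n f i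
      rw [toNormalWordAlgebra_xgen, ofNormalWordAlgebra, MonoidAlgebra.lift_of,
        NormalWord.lift_gen])

def sumAevalMul (g : Fin n → k[X]) : YBA k n f :=
  ∑ i, aeval (xgen k n f 0) (g i) * if i = 0 then 1 else xgen k n f i

theorem sumAevalMul_single_zero (p : k[X]) :
    sumAevalMul k n f (Pi.single 0 p) = aeval (xgen k n f 0) p := by
  rw [sumAevalMul, Fintype.sum_eq_single 0 fun i hi => by simp [hi]]
  simp

theorem bijective_sumAevalMul : Function.Bijective (sumAevalMul k n f) := by
  have h := MonoidAlgebra.bijective_sum_aeval_of_mul_of (k := k) (NormalWord.gen 0)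
    (fun i : Fin n => if i = 0 then 1 else NormalWord.gen i) NormalWord.bijective_pow_mul
  rw [← Function.Bijective.of_comp_iff' (equivNormalWordAlgebra k n f).bijective]
  convert h using 2 with g
  simp only [Function.comp_apply, sumAevalMul, equivNormalWordAlgebra, AlgEquiv.ofAlgHom_apply,
    map_sum, map_mul, ← aeval_algHom_apply, toNormalWordAlgebra_xgen,
    apply_ite (toNormalWordAlgebra k n f), apply_ite (MonoidAlgebra.of k _), map_one]

end YBA

/-- the subalgebra `R = k[x₁]` of `A = A(k,X,r_f)` is isomorphic to a
polynomial algebra in one variable (the evaluation map `k[t] → A`, `t ↦ x₁`, is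
injective with range `k[x₁]`), and `A` is a free left `R`-module of rank `n` with
free basis `{1, x₂, …, xₙ}` (every `a ∈ A` has a unique representation
`a = Σᵢ gᵢ(x₁)·vᵢ` with `v₀ = 1`, `vᵢ = xᵢ` for `i ≠ 0`). -/
theorem stmt_8 (k : Type*) [Field k] (n : ℕ) [NeZero n] (f : Equiv.Perm (Fin n)) :
    Function.Injective (Polynomial.aeval (xgen k n f 0) : Polynomial k →ₐ[k] YBA k n f) ∧
    (Polynomial.aeval (xgen k n f 0) : Polynomial k →ₐ[k] YBA k n f).range =
      Algebra.adjoin k {xgen k n f 0} ∧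
    ∀ a : YBA k n f, ∃! g : Fin n → Polynomial k,
      a = ∑ i, Polynomial.aeval (xgen k n f 0) (g i) *
        (if i = 0 then 1 else xgen k n f i) := by
  have hΦ := YBA.bijective_sumAevalMul k n f
  refine ⟨fun g h hgh => ?_, (Algebra.adjoin_singleton_eq_range_aeval k _).symm, fun a => ?_⟩
  · refine Pi.single_injective 0 (hΦ.1 ?_)
    rwa [YBA.sumAevalMul_single_zero, YBA.sumAevalMul_single_zero]
  · simpa only [eq_comm, YBA.sumAevalMul] using (Function.bijective_iff_existsUnique _).mp hΦ a
end
end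

section
/- Let k be a field, n ≥ 1, and f a permutation of {1,…,n}. The Yang–Baxter algebra A(k,X,r_f) of the permutation idempotent solution (X, r_f) is left Noetherian (Noetherian as a left module over itself). -/
noncomputable section

open FreeAlgebra

/-- the Yang–Baxter algebra `A(k,X,r_f)` of a permutation idempotent
solution is left Noetherian (Noetherian as a left module over itself). -/
theorem stmt_9 (k : Type*) [Field k] (n : ℕ) [NeZero n] (f : Equiv.Perm (Fin n)) :
    IsNoetherian (YBA k n f) (YBA k n f) := by
  classical
  set A := YBA k n f with hA
  let mk : FreeAlgebra k (Fin n) →ₐ[k] A := RingQuot.mkAlgHom k (ybRel k n f)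
  let g : Fin n → A := fun p => mk (ι k p)
  let u : A := g 0
  have key : ∀ j p : Fin n, g j * g p = u * g p := by
    intro j p
    have h1 := RingQuot.mkAlgHom_rel k
      (show ybRel k n f (ι k j * ι k p) (ι k (f p) * ι k p) from ⟨j, p, rfl, rfl⟩)
    have h2 := RingQuot.mkAlgHom_rel k
      (show ybRel k n f (ι k 0 * ι k p) (ι k (f p) * ι k p) from ⟨0, p, rfl, rfl⟩)
    simp only [map_mul] at h1 h2
    exact h1.trans h2.symm
  have hqu : ∀ q : Fin n, g q * u = u * u := fun q => key q 0
  letI : Module (Polynomial k) A := Module.compHom A (Polynomial.aeval u).toRingHom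
  have smul_def : ∀ (r : Polynomial k) (a : A), r • a = Polynomial.aeval u r * a :=
    fun _ _ => rfl
  set M : Submodule (Polynomial k) A :=
    Submodule.span (Polynomial k) ({1} ∪ Set.range g) with hM
  have h1M : (1 : A) ∈ M := Submodule.subset_span (Or.inl rfl)
  have hgM : ∀ p, g p ∈ M := fun p => Submodule.subset_span (Or.inr ⟨p, rfl⟩)
  have hk : ∀ (c : k) (m : A), m ∈ M → c • m ∈ M := by
    intro c m hm
    have h : c • m = (Polynomial.C c) • m := by
      rw [smul_def, Polynomial.aeval_C, Algebra.smul_def]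
    rw [h]; exact M.smul_mem _ hm
  have hmul_g : ∀ m ∈ M, ∀ q, g q * m ∈ M := by
    intro m hm
    induction hm using Submodule.span_induction with
    | mem x hx =>
      intro q
      rcases hx with h | ⟨p, rfl⟩
      · rw [h, mul_one]; exact hgM q
      · have hx : u * g p = (Polynomial.X : Polynomial k) • g p := by
          rw [smul_def, Polynomial.aeval_X]
        rw [key q p, hx]
        exact M.smul_mem _ (hgM p)
    | zero => intro q; rw [mul_zero]; exact M.zero_mem
    | add x y hx hy ihx ihy =>
      intro q; rw [mul_add]; exact M.add_mem (ihx q) (ihy q)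
    | smul r m hm ih =>
      intro q
      have hdecomp : r = Polynomial.C (r.coeff 0) + Polynomial.X * r.divX := by
        rw [add_comm]; exact (Polynomial.X_mul_divX_add r).symm
      have t1 : g q * ((Polynomial.C (r.coeff 0)) • m) = (r.coeff 0) • (g q * m) := by
        rw [smul_def, Polynomial.aeval_C, Algebra.smul_def, ← mul_assoc, ← mul_assoc,
          Algebra.commutes (r.coeff 0) (g q)]
      have t2 : g q * ((Polynomial.X * r.divX) • m)
          = (Polynomial.X : Polynomial k) • ((Polynomial.X : Polynomial k) • (r.divX • m)) := by
        simp only [smul_def, map_mul, Polynomial.aeval_X, ← mul_assoc]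
        rw [hqu q]
      have e : g q * (r • m)
          = g q * ((Polynomial.C (r.coeff 0)) • m) + g q * ((Polynomial.X * r.divX) • m) := by
        conv_lhs => rw [hdecomp]
        rw [add_smul, mul_add]
      rw [e, t1, t2]
      exact M.add_mem (hk _ _ (ih q))
        (M.smul_mem _ (M.smul_mem _ (M.smul_mem _ hm)))
  have hall : ∀ x : FreeAlgebra k (Fin n), ∀ m ∈ M, mk x * m ∈ M := by
    intro x
    induction x using FreeAlgebra.induction with
    | grade0 c =>
      intro m hm
      rw [AlgHom.commutes, ← Algebra.smul_def]
      exact hk c m hm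
    | grade1 p => intro m hm; exact hmul_g m hm p
    | mul a b ha hb => intro m hm; rw [map_mul, mul_assoc]; exact ha _ (hb _ hm)
    | add a b ha hb =>
      intro m hm; rw [map_add, add_mul]; exact M.add_mem (ha _ hm) (hb _ hm)
  have htop : M = ⊤ := by
    rw [eq_top_iff]
    rintro a -
    obtain ⟨x, rfl⟩ := RingQuot.mkAlgHom_surjective k (ybRel k n f) a
    simpa using hall x 1 h1M
  haveI : Module.Finite (Polynomial k) A := by
    rw [Module.finite_def]
    exact Submodule.fg_def.mpr ⟨{1} ∪ Set.range g,
      (Set.finite_singleton 1).union (Set.finite_range g), hM ▸ htop⟩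
  haveI hnoeth : IsNoetherian (Polynomial k) A :=
    isNoetherian_of_isNoetherianRing_of_finite (Polynomial k) A
  haveI : IsScalarTower (Polynomial k) A A :=
    ⟨fun r s m => by rw [smul_eq_mul, smul_eq_mul, smul_def, smul_def, mul_assoc]⟩
  exact isNoetherian_of_tower (Polynomial k) hnoeth


end
end

section
/- Let n ≥ 1, f a permutation of {1,…,n}, and S = S(X,r_f) the Yang–Baxter monoid of the permutation idempotent solution r_f. For every d ≥ 1, every choice y₁,…,y_{d−1} ∈ {x₁,…,x_n} and every q ∈ {1,…,n}, the equality y₁ y₂ ⋯ y_{d−1} x_q = x₁^{d−1} x_q holds in S. Consequently, for any two elements a, b ∈ S represented by words of the same length d and any 1 ≤ q ≤ n, one has a x_q = b x_q = x₁^d x_q in S. -/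
noncomputable section

/-- The congruence on the free monoid generated by the defining relations
`x_j x_p = f(x_p) x_p` of the Yang–Baxter monoid `S(X, r_f)`. -/
def ybCon (n : ℕ) (f : Equiv.Perm (Fin n)) : Con (FreeMonoid (Fin n)) :=
  conGen fun a b =>
    ∃ j p : Fin n, a = FreeMonoid.of j * FreeMonoid.of p ∧
      b = FreeMonoid.of (f p) * FreeMonoid.of p

/-- The Yang–Baxter monoid `S(X, r_f)`. -/
abbrev YBS (n : ℕ) (f : Equiv.Perm (Fin n)) := (ybCon n f).Quotient

lemma yb_rel (n : ℕ) (f : Equiv.Perm (Fin n)) (j p : Fin n) :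
    (ybCon n f) (FreeMonoid.of j * FreeMonoid.of p)
      (FreeMonoid.of (f p) * FreeMonoid.of p) :=
  ConGen.Rel.of _ _ ⟨j, p, rfl, rfl⟩

lemma yb_two (n : ℕ) [NeZero n] (f : Equiv.Perm (Fin n)) (j p : Fin n) :
    (ybCon n f) (FreeMonoid.of j * FreeMonoid.of p)
      (FreeMonoid.of (0 : Fin n) * FreeMonoid.of p) :=
  (yb_rel n f j p).trans (yb_rel n f 0 p).symm

lemma yb_main (n : ℕ) [NeZero n] (f : Equiv.Perm (Fin n)) :
    ∀ (ys : List (Fin n)) (q : Fin n),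
      (ybCon n f) ((ys.map FreeMonoid.of).prod * FreeMonoid.of q)
        ((FreeMonoid.of (0 : Fin n)) ^ ys.length * FreeMonoid.of q) := by
  intro ys
  induction ys with
  | nil => intro q; simp; exact (ybCon n f).refl _
  | cons y ys ih =>
    intro q
    cases ys with
    | nil => simpa using yb_two n f y q
    | cons z zs =>
      have h1 : (ybCon n f)
          (((y :: z :: zs).map FreeMonoid.of).prod * FreeMonoid.of q)
          (FreeMonoid.of (0 : Fin n) * (((z :: zs).map FreeMonoid.of).prod * FreeMonoid.of q)) := by
        have := (ybCon n f).mul (yb_two n f y z)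
          ((ybCon n f).refl ((zs.map FreeMonoid.of).prod * FreeMonoid.of q))
        simpa [List.map_cons, List.prod_cons, mul_assoc] using this
      have h2 := (ybCon n f).mul ((ybCon n f).refl (FreeMonoid.of (0 : Fin n))) (ih q)
      refine h1.trans ?_
      have : FreeMonoid.of (0 : Fin n) * ((FreeMonoid.of (0 : Fin n)) ^ (z :: zs).length * FreeMonoid.of q)
          = (FreeMonoid.of (0 : Fin n)) ^ (y :: z :: zs).length * FreeMonoid.of q := by
        rw [← mul_assoc, ← pow_succ']
        rfl
      rw [← this]
      exact h2

/-- in `S(X,r_f)` one has `y₁ ⋯ y_{d−1} x_q = x₁^{d−1} x_q` for all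
letters `yᵢ` and all `q`; consequently any two elements represented by words of equal
length `d` satisfy `a x_q = b x_q = x₁^d x_q`. -/
theorem stmt_10 (n : ℕ) [NeZero n] (f : Equiv.Perm (Fin n)) :
    (∀ (ys : List (Fin n)) (q : Fin n),
      (ybCon n f).mk' ((ys.map FreeMonoid.of).prod * FreeMonoid.of q) =
        (ybCon n f).mk' ((FreeMonoid.of 0) ^ ys.length * FreeMonoid.of q)) ∧
    (∀ (u v : List (Fin n)) (q : Fin n), u.length = v.length →
      (ybCon n f).mk' ((u.map FreeMonoid.of).prod) * (ybCon n f).mk' (FreeMonoid.of q) =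
        (ybCon n f).mk' ((v.map FreeMonoid.of).prod) * (ybCon n f).mk' (FreeMonoid.of q) ∧
      (ybCon n f).mk' ((u.map FreeMonoid.of).prod) * (ybCon n f).mk' (FreeMonoid.of q) =
        (ybCon n f).mk' ((FreeMonoid.of 0) ^ u.length * FreeMonoid.of q)) := by
  have key : ∀ (ys : List (Fin n)) (q : Fin n),
      (ybCon n f).mk' ((ys.map FreeMonoid.of).prod * FreeMonoid.of q) =
        (ybCon n f).mk' ((FreeMonoid.of (0 : Fin n)) ^ ys.length * FreeMonoid.of q) := by
    intro ys q
    exact (Con.eq _).mpr (yb_main n f ys q)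
  refine ⟨key, fun u v q h => ?_⟩
  have hu : (ybCon n f).mk' ((u.map FreeMonoid.of).prod) * (ybCon n f).mk' (FreeMonoid.of q)
      = (ybCon n f).mk' ((FreeMonoid.of (0 : Fin n)) ^ u.length * FreeMonoid.of q) := by
    rw [← MonoidHom.map_mul]; exact key u q
  have hv : (ybCon n f).mk' ((v.map FreeMonoid.of).prod) * (ybCon n f).mk' (FreeMonoid.of q)
      = (ybCon n f).mk' ((FreeMonoid.of (0 : Fin n)) ^ v.length * FreeMonoid.of q) := by
    rw [← MonoidHom.map_mul]; exact key v q
  exact ⟨by rw [hu, hv, h], hu⟩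

end
end

section
/- Let n ≥ 1 and f a permutation of {1,…,n}. The Yang–Baxter monoid S(X,r_f) of the permutation idempotent solution r_f is left cancellative: for all u, a, b ∈ S(X,r_f), if u·a = u·b then a = b. -/
noncomputable section

/-! In `S(X, r_f)` two words are equal exactly when they have the same length and the same last
letter. The defining relations preserve both, and conversely `x_j x_p = f(x_p) x_p = x_k x_p`
lets one rewrite, from left to right, every letter except the last one. Since the length and the
last letter of `a` can be read off from those of `u a`, left cancellation follows. -/

namespace FreeMonoid

variable {α : Type*}

theorem getLast?_toList_mul (u w : FreeMonoid α) :
    (u * w).toList.getLast? = w.toList.getLast?.or u.toList.getLast? :=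
  List.getLast?_append

def lengthLastCon (α : Type*) : Con (FreeMonoid α) where
  r w w' := w.length = w'.length ∧ w.toList.getLast? = w'.toList.getLast?
  iseqv :=
    { refl _ := ⟨rfl, rfl⟩
      symm h := ⟨h.1.symm, h.2.symm⟩
      trans h h' := ⟨h.1.trans h'.1, h.2.trans h'.2⟩ }
  mul' {w₁ w₁' w₂ w₂'} h₁ h₂ := by
    refine ⟨?_, ?_⟩
    · simp only [length_mul, h₁.1, h₂.1]
    · simp only [getLast?_toList_mul, h₁.2, h₂.2]

theorem getLast?_toList_mul_of_ne_one (u : FreeMonoid α) {w : FreeMonoid α} (hw : w ≠ 1) :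
    (u * w).toList.getLast? = w.toList.getLast? := by
  obtain ⟨x, hx⟩ := Option.isSome_iff_exists.mp
    (List.getLast?_isSome.mpr (toList.injective.ne hw : w.toList ≠ []))
  rw [getLast?_toList_mul, hx, Option.some_or]

theorem lengthLastCon.of_mul_left {u w w' : FreeMonoid α}
    (h : lengthLastCon α (u * w) (u * w')) : lengthLastCon α w w' := by
  obtain ⟨hlen, hlast⟩ := h
  have hlen' : w.length = w'.length := by
    simpa only [length_mul, Nat.add_left_cancel_iff] using hlen
  rcases eq_or_ne w 1 with rfl | hw
  · obtain rfl : w' = 1 := length_eq_zero.mp hlen'.symm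
    exact (lengthLastCon α).refl 1
  · have hw' : w' ≠ 1 := fun h => hw (length_eq_zero.mp (hlen'.trans (h ▸ length_one)))
    rw [getLast?_toList_mul_of_ne_one u hw, getLast?_toList_mul_of_ne_one u hw'] at hlast
    exact ⟨hlen', hlast⟩

end FreeMonoid

namespace ybCon

variable {n : ℕ} (f : Equiv.Perm (Fin n))

theorem le_lengthLastCon : ybCon n f ≤ FreeMonoid.lengthLastCon (Fin n) := by
  refine Con.conGen_le.mpr ?_
  rintro _ _ ⟨j, p, rfl, rfl⟩
  exact ⟨rfl, rfl⟩

theorem of_mul_rel_of_mul_of (j k p : Fin n) :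
    ybCon n f (.of j * .of p) (.of k * .of p) :=
  (ConGen.Rel.of _ _ ⟨j, p, rfl, rfl⟩).trans (ConGen.Rel.of _ _ ⟨k, p, rfl, rfl⟩).symm

theorem of_mul_rel_of_mul {w : FreeMonoid (Fin n)} (hw : w ≠ 1) (j k : Fin n) :
    ybCon n f (.of j * w) (.of k * w) := by
  induction w using FreeMonoid.casesOn with
  | one => exact absurd rfl hw
  | of_mul p w =>
    simpa only [mul_assoc] using (ybCon n f).mul (of_mul_rel_of_mul_of f j k p) ((ybCon n f).refl w)

theorem ofList_append_singleton_rel {l₁ l₂ : List (Fin n)} (h : l₁.length = l₂.length)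
    (p : Fin n) : ybCon n f (.ofList (l₁ ++ [p])) (.ofList (l₂ ++ [p])) := by
  induction l₁ generalizing l₂ with
  | nil => rw [List.eq_nil_of_length_eq_zero h.symm]; exact (ybCon n f).refl _
  | cons j t ih =>
    obtain ⟨k, s, rfl⟩ := List.exists_cons_of_length_eq_add_one h.symm
    have hne : FreeMonoid.ofList (s ++ [p]) ≠ 1 := by simp
    simp only [List.cons_append, FreeMonoid.ofList_cons]
    exact ((ybCon n f).mul ((ybCon n f).refl (.of j)) (ih (by simpa using h))).trans
      (of_mul_rel_of_mul f hne j k)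

theorem lengthLastCon_le : FreeMonoid.lengthLastCon (Fin n) ≤ ybCon n f := by
  rintro w w' ⟨hlen, hlast⟩
  cases hp : w.toList.getLast? with
  | none =>
    obtain rfl : w = 1 := FreeMonoid.toList.injective (List.getLast?_eq_none_iff.mp hp)
    obtain rfl : w' = 1 := FreeMonoid.length_eq_zero.mp hlen.symm
    exact (ybCon n f).refl 1
  | some p =>
    obtain ⟨l₁, hl₁⟩ := List.getLast?_eq_some_iff.mp hp
    obtain ⟨l₂, hl₂⟩ := List.getLast?_eq_some_iff.mp (hlast ▸ hp)
    rw [← FreeMonoid.ofList_toList w, ← FreeMonoid.ofList_toList w', hl₁, hl₂]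
    refine ofList_append_singleton_rel f ?_ p
    simpa [FreeMonoid.length, hl₁, hl₂] using hlen

theorem eq_lengthLastCon : ybCon n f = FreeMonoid.lengthLastCon (Fin n) :=
  le_antisymm (le_lengthLastCon f) (lengthLastCon_le f)

end ybCon

theorem stmt_11_general (n : ℕ) (f : Equiv.Perm (Fin n)) :
    ∀ u a b : YBS n f, u * a = u * b → a = b := by
  rintro ⟨u⟩ ⟨a⟩ ⟨b⟩ h
  have huab : ybCon n f (u * a) (u * b) := Quotient.exact h
  rw [ybCon.eq_lengthLastCon] at huab
  refine Quot.sound ?_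
  rw [ybCon.eq_lengthLastCon]
  exact FreeMonoid.lengthLastCon.of_mul_left huab

/-- the Yang–Baxter monoid `S(X,r_f)` of a permutation idempotent
solution is left cancellative. -/
theorem stmt_11 (n : ℕ) [NeZero n] (f : Equiv.Perm (Fin n)) :
    ∀ u a b : YBS n f, u * a = u * b → a = b :=
  stmt_11_general n f

end
end

section
/- Let n ≥ 2 and f a permutation of {1,…,n}. The Yang–Baxter monoid S(X,r_f) of the permutation idempotent solution r_f is not right cancellative: the elements a = [x₁ x₁] and b = [x₁ x₂] of S(X,r_f) are distinct, yet a·x_q = b·x_q holds in S(X,r_f) for every 1 ≤ q ≤ n. -/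
/-! Every defining relation `x_j x_p = f(x_p) x_p` preserves the last letter of a word, so words
ending in different letters stay distinct in `S(X, r_f)`. On the other hand the relation
identifies `x_j x_p` with `x_k x_p` for all `j, k`, so `x_1 x_1 x_q = x_1 x_2 x_q` by
rewriting the last two letters. -/

noncomputable section

namespace FreeMonoid

def lastLetterCon (α : Type*) : Con (FreeMonoid α) where
  r a b := a.toList.getLast? = b.toList.getLast?
  iseqv := ⟨fun _ => rfl, Eq.symm, Eq.trans⟩
  mul' {a b c d} (hab : a.toList.getLast? = b.toList.getLast?)
      (hcd : c.toList.getLast? = d.toList.getLast?) := by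
    show (a * c).toList.getLast? = (b * d).toList.getLast?
    rw [toList_mul, toList_mul, List.getLast?_append, List.getLast?_append, hab, hcd]

end FreeMonoid

open FreeMonoid

section YangBaxterMonoid

variable {n : ℕ} (f : Equiv.Perm (Fin n))

theorem ybCon_le_lastLetterCon : ybCon n f ≤ lastLetterCon (Fin n) :=
  Con.conGen_le.mpr <| by
    rintro _ _ ⟨j, p, rfl, rfl⟩
    rfl

theorem getLast?_eq_of_ybCon {a b : FreeMonoid (Fin n)} (h : ybCon n f a b) :
    a.toList.getLast? = b.toList.getLast? :=
  ybCon_le_lastLetterCon f h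

theorem ybCon_mk'_of_mul_mk'_of_eq (j k p : Fin n) :
    (ybCon n f).mk' (of j) * (ybCon n f).mk' (of p) =
      (ybCon n f).mk' (of k) * (ybCon n f).mk' (of p) := by
  simp only [← map_mul]
  exact (Con.eq _).mpr <|
    (ConGen.Rel.of _ _ ⟨j, p, rfl, rfl⟩).trans (ConGen.Rel.of _ _ ⟨k, p, rfl, rfl⟩).symm

end YangBaxterMonoid

/-- for `n ≥ 2` the Yang–Baxter monoid `S(X,r_f)` is not right
cancellative: `[x₁x₁] ≠ [x₁x₂]` but `[x₁x₁]·x_q = [x₁x₂]·x_q` for every `q`. -/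
theorem stmt_12 (n : ℕ) (hn : 2 ≤ n) (f : Equiv.Perm (Fin n)) :
    (ybCon n f).mk' (FreeMonoid.of ⟨0, by omega⟩ * FreeMonoid.of ⟨0, by omega⟩) ≠
      (ybCon n f).mk' (FreeMonoid.of ⟨0, by omega⟩ * FreeMonoid.of ⟨1, by omega⟩) ∧
    ∀ q : Fin n,
      (ybCon n f).mk' (FreeMonoid.of ⟨0, by omega⟩ * FreeMonoid.of ⟨0, by omega⟩) *
          (ybCon n f).mk' (FreeMonoid.of q) =
        (ybCon n f).mk' (FreeMonoid.of ⟨0, by omega⟩ * FreeMonoid.of ⟨1, by omega⟩) *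
          (ybCon n f).mk' (FreeMonoid.of q) := by
  refine ⟨fun h => ?_, fun q => ?_⟩
  · have := getLast?_eq_of_ybCon f ((Con.eq _).mp h)
    simp at this
  · simp only [map_mul, mul_assoc]
    exact congrArg _ (ybCon_mk'_of_mul_mk'_of_eq f _ _ q)

end
end

section
/- Let n ≥ 1 and let σ be a permutation of Q = {1,…,n}. On the set N⁺ = {(d,q) : d ≥ 1 an integer, q ∈ Q} (encoding the normal word x₁^{d−1} x_q), define ρ : N⁺ × N⁺ → N⁺ × N⁺ by ρ((d,p),(m,q)) = ((m, σ^d(q)), (d,q)). Then: (1) ρ satisfies the set-theoretic braid relation (ρ × id)(id × ρ)(ρ × id) = (id × ρ)(ρ × id)(id × ρ) on N⁺ × N⁺ × N⁺; (2) ρ is left nondegenerate: for each fixed a = (d,p) ∈ N⁺, the map b ↦ (first component of ρ(a,b)) is a bijection of N⁺; (3) ρ ∘ ρ ∘ ρ = ρ; (4) if n ≥ 2 then ρ ∘ ρ ≠ ρ. -/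
/-- The braiding operator on the set `N⁺ = {(d, q) : d ≥ 1, q ∈ {1,…,n}}` of normal
words `x₁^{d−1} x_q`: `ρ((d,p),(m,q)) = ((m, σ^d(q)), (d,q))`. -/
def nrho (n : ℕ) (σ : Equiv.Perm (Fin n)) :
    (ℕ+ × Fin n) × (ℕ+ × Fin n) → (ℕ+ × Fin n) × (ℕ+ × Fin n) :=
  fun ab => ((ab.2.1, (σ ^ (ab.1.1 : ℕ)) ab.2.2), (ab.1.1, ab.2.2))

/-- `ρ¹² = ρ × id` on triples. -/
def nrho12 (n : ℕ) (σ : Equiv.Perm (Fin n)) :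
    (ℕ+ × Fin n) × (ℕ+ × Fin n) × (ℕ+ × Fin n) →
      (ℕ+ × Fin n) × (ℕ+ × Fin n) × (ℕ+ × Fin n) :=
  fun t => ((nrho n σ (t.1, t.2.1)).1, (nrho n σ (t.1, t.2.1)).2, t.2.2)

/-- `ρ²³ = id × ρ` on triples. -/
def nrho23 (n : ℕ) (σ : Equiv.Perm (Fin n)) :
    (ℕ+ × Fin n) × (ℕ+ × Fin n) × (ℕ+ × Fin n) →
      (ℕ+ × Fin n) × (ℕ+ × Fin n) × (ℕ+ × Fin n) :=
  fun t => (t.1, nrho n σ (t.2.1, t.2.2))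

/-- (1) `ρ` satisfies the set-theoretic braid relation; (2) `ρ` is left
nondegenerate; (3) `ρ ∘ ρ ∘ ρ = ρ`; (4) if `n ≥ 2` then `ρ ∘ ρ ≠ ρ`. -/
theorem stmt_17 (n : ℕ) (σ : Equiv.Perm (Fin n)) :
    (nrho12 n σ ∘ nrho23 n σ ∘ nrho12 n σ = nrho23 n σ ∘ nrho12 n σ ∘ nrho23 n σ) ∧
    (∀ a : ℕ+ × Fin n, Function.Bijective fun b : ℕ+ × Fin n => (nrho n σ (a, b)).1) ∧
    (nrho n σ ∘ nrho n σ ∘ nrho n σ = nrho n σ) ∧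
    (2 ≤ n → nrho n σ ∘ nrho n σ ≠ nrho n σ) := by
  refine ⟨?_, ?_, ?_, ?_⟩
  · funext ⟨⟨d,p⟩,⟨m,q⟩,⟨k,r⟩⟩
    simp [nrho12, nrho23, nrho, ← Equiv.Perm.mul_apply, ← pow_add, Nat.add_comm]
  · rintro ⟨d,p⟩
    exact ((Equiv.refl ℕ+).prodCongr (σ ^ (d : ℕ))).bijective
  · funext ⟨⟨d,p⟩,⟨m,q⟩⟩
    simp [nrho]
  · intro hn h
    have := congrFun h ((1, ⟨0, by omega⟩), (2, ⟨0, by omega⟩))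
    simp [nrho, Prod.ext_iff] at this
end

section
/- Let k be a field, n ≥ 1, and A = k⟨x₁,…,x_n⟩/(x_j x_p − x₁ x_p : 2 ≤ j ≤ n, 1 ≤ p ≤ n) the Yang–Baxter algebra of a permutation idempotent solution of order n. For every integer d ≥ 2, the assignment x_i ↦ x₁^{d−1} x_i (the image in A of the word with d−1 copies of x₁ followed by x_i) extends to a well-defined k-algebra homomorphism v_{n,d} : A → A (the (n,d)-Veronese map), and v_{n,d} is injective. Its image equals the d-Veronese subalgebra A^{(d)} of A, namely the k-linear span in A of the images of all words whose length is a multiple of d; equivalently, the image is the subalgebra of A generated by {x₁^{d−1} x_i : 1 ≤ i ≤ n}. In particular, the d-Veronese subalgebra A^{(d)} is isomorphic to A as a k-algebra. -/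
/-!
Since `x_j x_p = x₁ x_p`, every nonempty word equals `x₁^m x_i`, where `m + 1` is its length and
`x_i` its last letter. These normal forms multiply by `⟨m, i⟩ ⟨l, j⟩ = ⟨m + l + 1, j⟩`, and `A` is
the algebra of this semigroup with a unit adjoined: the inverse isomorphism sends `x_i` to
`⟨0, i⟩`. For `d = e + 1` the Veronese map is induced by the injective semigroup endomorphism
`⟨m, i⟩ ↦ ⟨m d + e, i⟩`, which turns the normal form of a word of length `m + 1` into that of a
word of length `(m + 1) d`. Its image is generated by the words `x₁^e x_i` of length `d`, and
the words of length divisible by `d` are exactly the products of those.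
-/

noncomputable section

open FreeAlgebra

/-- The standard defining relations `x_j x_p = x₁ x_p` (`j ≠ 1`) of the Yang–Baxter
algebra of a permutation idempotent solution of order `n`. -/
def stdRel (k : Type*) [Field k] (n : ℕ) [NeZero n] :
    FreeAlgebra k (Fin n) → FreeAlgebra k (Fin n) → Prop :=
  fun a b => ∃ j p : Fin n, j ≠ 0 ∧ a = ι k j * ι k p ∧ b = ι k (0 : Fin n) * ι k p

/-- The Yang–Baxter algebra `A(k,n) = k⟨x₁,…,xₙ⟩/(x_j x_p − x₁ x_p)`. -/
abbrev StdYBA (k : Type*) [Field k] (n : ℕ) [NeZero n] := RingQuot (stdRel k n)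

/-- The image of the generator `x_i` in `A(k,n)`. -/
def sx (k : Type*) [Field k] (n : ℕ) [NeZero n] (i : Fin n) : StdYBA k n :=
  RingQuot.mkAlgHom k (stdRel k n) (ι k i)

/-- The image in `A(k,n)` of the word indexed by the list `w`. -/
def sword (k : Type*) [Field k] (n : ℕ) [NeZero n] (w : List (Fin n)) : StdYBA k n :=
  RingQuot.mkAlgHom k (stdRel k n) ((w.map (ι k)).prod)

namespace StdYBA

/-- `⟨m, i⟩` stands for the word `x₁^m x_i`. -/
@[ext]
structure NormalWord (n : ℕ) where
  exp : ℕ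
  last : Fin n

namespace NormalWord

variable {n : ℕ}

instance : Mul (NormalWord n) := ⟨fun a b => ⟨a.exp + b.exp + 1, b.last⟩⟩

lemma mul_exp (a b : NormalWord n) : (a * b).exp = a.exp + b.exp + 1 := rfl

instance : Semigroup (NormalWord n) where
  mul_assoc a b c := by
    ext
    · simp only [mul_exp]; omega
    · rfl

def veronese (e : ℕ) : NormalWord n →ₙ* NormalWord n where
  toFun a := ⟨a.exp * (e + 1) + e, a.last⟩
  map_mul' a b := by
    ext
    · simp only [mul_exp]; ring
    · rfl

lemma veronese_apply (e : ℕ) (a : NormalWord n) :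
    veronese e a = ⟨a.exp * (e + 1) + e, a.last⟩ :=
  rfl

lemma veronese_injective (e : ℕ) : Function.Injective (veronese (n := n) e) := by
  rintro ⟨m, i⟩ ⟨l, j⟩ h
  simp only [veronese_apply, mk.injEq, add_left_inj] at h
  obtain ⟨hml, rfl⟩ := h
  rw [Nat.eq_of_mul_eq_mul_right e.succ_pos hml]

end NormalWord

open NormalWord

variable (k : Type*) [Field k] (n : ℕ) [NeZero n]

lemma sx_mul_sx (j p : Fin n) : sx k n j * sx k n p = sx k n 0 * sx k n p := by
  rcases eq_or_ne j 0 with rfl | hj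
  · rfl
  · simp only [sx, ← map_mul]
    exact RingQuot.mkAlgHom_rel k ⟨j, p, hj, rfl, rfl⟩

lemma sx_mul_pow_mul_sx (i j : Fin n) (l : ℕ) :
    sx k n i * (sx k n 0 ^ l * sx k n j) = sx k n 0 ^ (l + 1) * sx k n j := by
  cases l with
  | zero => simpa using sx_mul_sx k n i j
  | succ l =>
    rw [pow_succ', mul_assoc, ← mul_assoc, sx_mul_sx]
    simp only [pow_succ', mul_assoc]

lemma pow_mul_sx_mul_pow_mul_sx (i j : Fin n) (m l : ℕ) :
    (sx k n 0 ^ m * sx k n i) * (sx k n 0 ^ l * sx k n j) =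
      sx k n 0 ^ (m + l + 1) * sx k n j := by
  rw [mul_assoc, sx_mul_pow_mul_sx, ← mul_assoc, ← pow_add, ← add_assoc]

def normalForm : NormalWord n →ₙ* StdYBA k n where
  toFun a := sx k n 0 ^ a.exp * sx k n a.last
  map_mul' a b := (pow_mul_sx_mul_pow_mul_sx k n a.last b.last a.exp b.exp).symm

/-- The adjoined unit of `WithOne` is the empty word. -/
abbrev NormalWordAlgebra := MonoidAlgebra k (WithOne (NormalWord n))

def ofNormalWord (a : NormalWord n) : NormalWordAlgebra k n :=
  MonoidAlgebra.of k (WithOne (NormalWord n)) a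

def toNormalWordAlgebra : StdYBA k n →ₐ[k] NormalWordAlgebra k n :=
  RingQuot.liftAlgHom k
    ⟨FreeAlgebra.lift k fun i => ofNormalWord k n ⟨0, i⟩, by
      rintro _ _ ⟨j, p, -, rfl, rfl⟩
      simp only [map_mul, FreeAlgebra.lift_ι_apply, ofNormalWord]
      rw [← map_mul, ← map_mul]
      rfl⟩

def ofNormalWordAlgebra : NormalWordAlgebra k n →ₐ[k] StdYBA k n :=
  MonoidAlgebra.lift k (StdYBA k n) (WithOne (NormalWord n)) (WithOne.lift (normalForm k n))

lemma toNormalWordAlgebra_sx (i : Fin n) :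
    toNormalWordAlgebra k n (sx k n i) = ofNormalWord k n ⟨0, i⟩ := by
  rw [sx, toNormalWordAlgebra, RingQuot.liftAlgHom_mkAlgHom_apply, FreeAlgebra.lift_ι_apply]

lemma ofNormalWordAlgebra_ofNormalWord (a : NormalWord n) :
    ofNormalWordAlgebra k n (ofNormalWord k n a) =
      sx k n 0 ^ a.exp * sx k n a.last := by
  rw [ofNormalWordAlgebra, ofNormalWord, MonoidAlgebra.lift_of, WithOne.lift_coe]
  rfl

lemma ofNormalWord_pow_mul (m : ℕ) (i : Fin n) :
    ofNormalWord k n ⟨0, 0⟩ ^ m * ofNormalWord k n ⟨0, i⟩ = ofNormalWord k n ⟨m, i⟩ := by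
  induction m with
  | zero => simp
  | succ m ih =>
    rw [pow_succ', mul_assoc, ih, ofNormalWord, ofNormalWord, ← map_mul, ← WithOne.coe_mul]
    congr 2
    ext
    · simp only [mul_exp]; omega
    · rfl

def equivNormalWordAlgebra : StdYBA k n ≃ₐ[k] NormalWordAlgebra k n :=
  AlgEquiv.ofAlgHom (toNormalWordAlgebra k n) (ofNormalWordAlgebra k n)
    (by
      apply MonoidAlgebra.algHom_ext
      intro x
      induction x with
      | one => simp [← MonoidAlgebra.of_apply]
      | coe a =>
        change toNormalWordAlgebra k n (ofNormalWordAlgebra k n (ofNormalWord k n a)) = _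
        rw [ofNormalWordAlgebra_ofNormalWord, map_mul, map_pow, toNormalWordAlgebra_sx,
          toNormalWordAlgebra_sx, ofNormalWord_pow_mul]
        rfl
      exact Subsingleton.elim _ _)
    (by
      apply RingQuot.ringQuot_ext'
      apply FreeAlgebra.hom_ext
      funext i
      change ofNormalWordAlgebra k n (toNormalWordAlgebra k n (sx k n i)) = sx k n i
      rw [toNormalWordAlgebra_sx, ofNormalWordAlgebra_ofNormalWord, pow_zero, one_mul])

def veronese (e : ℕ) : StdYBA k n →ₐ[k] StdYBA k n :=
  (equivNormalWordAlgebra k n).symm.toAlgHom.comp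
    ((MonoidAlgebra.mapDomainAlgHom k k (WithOne.mapMulHom (NormalWord.veronese e))).comp
      (equivNormalWordAlgebra k n).toAlgHom)

lemma veronese_sx (e : ℕ) (i : Fin n) : veronese k n e (sx k n i) = sx k n 0 ^ e * sx k n i := by
  change ofNormalWordAlgebra k n (MonoidAlgebra.mapDomainAlgHom k k
    (WithOne.mapMulHom (NormalWord.veronese e)) (toNormalWordAlgebra k n (sx k n i))) = _
  rw [toNormalWordAlgebra_sx, ofNormalWord, MonoidAlgebra.mapDomainAlgHom_apply,
    MonoidAlgebra.of_apply, MonoidAlgebra.mapDomain_single, WithOne.mapMulHom_coe,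
    NormalWord.veronese_apply, zero_mul, zero_add, ← MonoidAlgebra.of_apply]
  exact ofNormalWordAlgebra_ofNormalWord k n ⟨e, i⟩

lemma veronese_injective (e : ℕ) : Function.Injective (veronese k n e) :=
  (equivNormalWordAlgebra k n).symm.injective.comp <|
    (MonoidAlgebra.mapDomain_injective
      (WithOne.mapMulHom_injective (NormalWord.veronese_injective e))).comp
    (equivNormalWordAlgebra k n).injective

lemma adjoin_range_sx : Algebra.adjoin k (Set.range (sx k n)) = ⊤ := by
  have : Set.range (sx k n) = RingQuot.mkAlgHom k (stdRel k n) '' Set.range (ι k) := by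
    rw [← Set.range_comp]
    rfl
  rw [this, ← AlgHom.map_adjoin, FreeAlgebra.adjoin_range_ι, Algebra.map_top,
    AlgHom.range_eq_top]
  exact RingQuot.mkAlgHom_surjective k _

lemma range_eq_adjoin_range_comp_sx {B : Type*} [Semiring B] [Algebra k B]
    (f : StdYBA k n →ₐ[k] B) : f.range = Algebra.adjoin k (Set.range (f ∘ sx k n)) := by
  rw [← Algebra.map_top, ← adjoin_range_sx, AlgHom.map_adjoin, Set.range_comp]

lemma sword_nil : sword k n [] = 1 := by
  simp [sword]

lemma sword_cons (j : Fin n) (w : List (Fin n)) : sword k n (j :: w) = sx k n j * sword k n w := by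
  simp [sword, sx]

lemma sword_append (w w' : List (Fin n)) : sword k n (w ++ w') = sword k n w * sword k n w' := by
  simp [sword]

lemma sword_append_singleton (w : List (Fin n)) (i : Fin n) :
    sword k n (w ++ [i]) = sx k n 0 ^ w.length * sx k n i := by
  induction w with
  | nil => simp [sword_cons, sword_nil]
  | cons j w ih => rw [List.cons_append, sword_cons, ih, sx_mul_pow_mul_sx, List.length_cons]

/-- Its span is the `d`-Veronese subalgebra `A^{(d)}`. -/
def veroneseWords (d : ℕ) : Submonoid (StdYBA k n) where
  carrier := {a | ∃ w : List (Fin n), d ∣ w.length ∧ a = sword k n w}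
  one_mem' := ⟨[], dvd_zero d, (sword_nil k n).symm⟩
  mul_mem' := by
    rintro _ _ ⟨w, hw, rfl⟩ ⟨w', hw', rfl⟩
    exact ⟨w ++ w', by simpa using dvd_add hw hw', (sword_append k n w w').symm⟩

lemma veroneseWords_eq_closure (d : ℕ) :
    veroneseWords k n d =
      Submonoid.closure {a | ∃ w : List (Fin n), w.length = d ∧ a = sword k n w} := by
  refine le_antisymm ?_ (Submonoid.closure_le.mpr ?_)
  · rintro _ ⟨w, ⟨c, hc⟩, rfl⟩
    induction c generalizing w with
    | zero => simp_all [sword_nil]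
    | succ c ih =>
      rw [← List.take_append_drop d w, sword_append]
      refine mul_mem (Submonoid.subset_closure ⟨_, ?_, rfl⟩) (ih _ ?_)
      · rw [List.length_take, hc]
        exact min_eq_left (Nat.le_mul_of_pos_right d c.succ_pos)
      · rw [List.length_drop, hc, Nat.mul_succ, Nat.add_sub_cancel]
  · rintro _ ⟨w, rfl, rfl⟩
    exact ⟨w, dvd_rfl, rfl⟩

lemma words_of_length_succ (e : ℕ) :
    {a | ∃ w : List (Fin n), w.length = e + 1 ∧ a = sword k n w} =
      Set.range fun i => sx k n 0 ^ e * sx k n i := by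
  ext a
  constructor
  · rintro ⟨w, hw, rfl⟩
    have hne : w ≠ [] := List.ne_nil_of_length_eq_add_one hw
    refine ⟨w.getLast hne, ?_⟩
    conv_rhs => rw [← List.dropLast_append_getLast hne]
    rw [sword_append_singleton, List.length_dropLast, hw, Nat.add_sub_cancel]
  · rintro ⟨i, rfl⟩
    refine ⟨List.replicate e 0 ++ [i], by simp, ?_⟩
    rw [sword_append_singleton, List.length_replicate]

lemma range_veronese (e : ℕ) :
    (veronese k n e).range = Algebra.adjoin k (Set.range fun i => sx k n 0 ^ e * sx k n i) := by
  rw [range_eq_adjoin_range_comp_sx]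
  congr 2
  exact funext (veronese_sx k n e)

lemma coe_range_veronese (e : ℕ) :
    ((veronese k n e).range : Set (StdYBA k n)) =
      Submodule.span k (veroneseWords k n (e + 1) : Set (StdYBA k n)) := by
  rw [range_veronese, ← Subalgebra.coe_toSubmodule, Algebra.adjoin_eq_span,
    veroneseWords_eq_closure, words_of_length_succ]

end StdYBA

/-- for every `d ≥ 2` the assignment `x_i ↦ x₁^{d−1} x_i` extends to a
well-defined injective `k`-algebra endomorphism `v_{n,d}` of `A(k,n)` whose image is
the `d`-Veronese subalgebra `A^{(d)}` (the span of images of words of length divisible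
by `d`), which is also the subalgebra generated by `{x₁^{d−1} x_i}`; in particular
`A^{(d)} ≅ A`. -/
theorem stmt_18 (k : Type*) [Field k] (n : ℕ) [NeZero n] (d : ℕ) (hd : 2 ≤ d) :
    ∃ v : StdYBA k n →ₐ[k] StdYBA k n,
      (∀ i : Fin n, v (sx k n i) = (sx k n 0) ^ (d - 1) * sx k n i) ∧
      Function.Injective v ∧
      ((v.range : Set (StdYBA k n)) =
        ((Submodule.span k
          {a : StdYBA k n | ∃ w : List (Fin n), d ∣ w.length ∧ a = sword k n w} :
            Submodule k (StdYBA k n)) : Set (StdYBA k n))) ∧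
      v.range = Algebra.adjoin k (Set.range fun i : Fin n =>
        (sx k n 0) ^ (d - 1) * sx k n i) := by
  obtain ⟨e, rfl⟩ : ∃ e, d = e + 1 := ⟨d - 1, by omega⟩
  rw [Nat.add_sub_cancel]
  exact ⟨StdYBA.veronese k n e, StdYBA.veronese_sx k n e, StdYBA.veronese_injective k n e,
    StdYBA.coe_range_veronese k n e, StdYBA.range_veronese k n e⟩

end
end

section
/- Let k be a field and m, n ≥ 1. Let A = k⟨x₁,…,x_m⟩/(x_j x_p − x₁ x_p : 2 ≤ j ≤ m, 1 ≤ p ≤ m) and B = k⟨y₁,…,y_n⟩/(y_b y_a − y₁ y_a : 2 ≤ b ≤ n, 1 ≤ a ≤ n) be the Yang–Baxter algebras of permutation idempotent solutions of orders m and n, and let C = k⟨z_{(i,a)} : 1 ≤ i ≤ m, 1 ≤ a ≤ n⟩/(z_w z_v − z_{(1,1)} z_v : w ≠ (1,1), all v) be the Yang–Baxter algebra of a permutation idempotent solution of order m n. Then the assignment z_{(i,a)} ↦ x_i ⊗ y_a extends to a well-defined k-algebra homomorphism s_{m,n} : C → A ⊗_k B (the (m,n)-Segre map), s_{m,n} is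 injective, and its image equals the Segre product A ∘ B = ⊕_{s ≥ 0} A_s ⊗ B_s, i.e. the k-linear span in A ⊗_k B of all elements [u] ⊗ [v] where u and v are words of equal length in the respective generators; this image is also the subalgebra of A ⊗_k B generated by {x_i ⊗ y_a : 1 ≤ i ≤ m, 1 ≤ a ≤ n}. In particular C ≅ A ∘ B. -/
/-!
In `SegYBA k I i₀` the relations `z_w z_v = z_{i₀} z_v` rewrite every nonempty word to
`z_{i₀}ᵗ z_i` with the same length `t + 1` and the same last letter `i`, and these normal words
multiply by adding lengths and keeping the last letter of the right factor. So the algebra is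
the monoid algebra of this monoid of normal words, which together with `1` form a basis.
The Segre map sends the normal word `z_{(i₀,j₀)}ᵗ z_{(i,a)}` to the basis tensor
`x_{i₀}ᵗ x_i ⊗ y_{j₀}ᵗ y_a`, and distinct normal words go to distinct basis tensors, so it is
injective. Its image is the subalgebra generated by the `x_i ⊗ y_a`, i.e. the span of the
products of these generators, and such products are exactly the `[u] ⊗ [v]` with `|u| = |v|`.
-/

noncomputable section

open FreeAlgebra

open scoped TensorProduct

/-- The standard defining relations `z_j z_p = z_{1} z_p` (`j ≠ 1`, `1` being a chosen
first index) of the Yang–Baxter algebra of a permutation idempotent solution indexed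
by a type `I` with a distinguished element. -/
def segRel (k : Type*) [Field k] (I : Type*) (i₀ : I) :
    FreeAlgebra k I → FreeAlgebra k I → Prop :=
  fun a b => ∃ w v : I, w ≠ i₀ ∧ a = ι k w * ι k v ∧ b = ι k i₀ * ι k v

/-- The Yang–Baxter algebra of a permutation idempotent solution on `I`, in its
standard presentation with distinguished generator `i₀`. -/
abbrev SegYBA (k : Type*) [Field k] (I : Type*) (i₀ : I) := RingQuot (segRel k I i₀)

/-- The image of the generator indexed by `i` in `SegYBA k I i₀`. -/
def sgx (k : Type*) [Field k] (I : Type*) (i₀ : I) (i : I) : SegYBA k I i₀ :=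
  RingQuot.mkAlgHom k (segRel k I i₀) (ι k i)

/-- The image of the word indexed by the list `w` in `SegYBA k I i₀`. -/
def sgword (k : Type*) [Field k] (I : Type*) (i₀ : I) (w : List I) : SegYBA k I i₀ :=
  RingQuot.mkAlgHom k (segRel k I i₀) ((w.map (ι k)).prod)

/-- `⟨t, i⟩` stands for the word `z_{i₀}ᵗ z_i` of `SegYBA k I i₀`. -/
structure NormalWord_s19 (I : Type*) where
  exp : ℕ
  last : I

namespace NormalWord_s19

variable {I J : Type*}

instance : Mul (NormalWord_s19 I) := ⟨fun g h => ⟨g.exp + h.exp + 1, h.last⟩⟩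

theorem mul_def (g h : NormalWord_s19 I) : g * h = ⟨g.exp + h.exp + 1, h.last⟩ := rfl

instance : Semigroup (NormalWord_s19 I) where
  mul_assoc g h l := by
    simp only [mul_def, mk.injEq, and_true]
    omega

theorem mk_zero_pow_mul (i₀ i : I) (t : ℕ) :
    ((⟨0, i₀⟩ : NormalWord_s19 I) : WithOne (NormalWord_s19 I)) ^ t * ↑(⟨0, i⟩ : NormalWord_s19 I) =
      ↑(⟨t, i⟩ : NormalWord_s19 I) := by
  induction t with
  | zero => rw [pow_zero, one_mul]
  | succ t ih => rw [pow_succ', mul_assoc, ih, ← WithOne.coe_mul, mul_def, Nat.zero_add]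

def split : WithOne (NormalWord_s19 (I × J)) → WithOne (NormalWord_s19 I) × WithOne (NormalWord_s19 J)
  | 1 => (1, 1)
  | (g : NormalWord_s19 (I × J)) =>
    (↑(⟨g.exp, g.last.1⟩ : NormalWord_s19 I), ↑(⟨g.exp, g.last.2⟩ : NormalWord_s19 J))

theorem split_one : split (1 : WithOne (NormalWord_s19 (I × J))) = (1, 1) := rfl

theorem split_coe (g : NormalWord_s19 (I × J)) :
    split (g : WithOne (NormalWord_s19 (I × J))) =
      (↑(⟨g.exp, g.last.1⟩ : NormalWord_s19 I), ↑(⟨g.exp, g.last.2⟩ : NormalWord_s19 J)) :=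
  rfl

theorem split_injective : Function.Injective (split (I := I) (J := J)) := by
  rintro (_ | ⟨t, i, a⟩) (_ | ⟨t', i', a'⟩) h <;>
    simp only [split, Prod.mk.injEq, WithOne.coe_inj, mk.injEq] at h
  · rfl
  · exact absurd h.1 WithOne.one_ne_coe
  · exact absurd h.1 WithOne.coe_ne_one
  · obtain ⟨⟨rfl, rfl⟩, -, rfl⟩ := h
    rfl

end NormalWord_s19

namespace SegYBA

variable {k : Type*} [Field k] {I : Type*} {i₀ : I}

theorem sgword_eq_prod (w : List I) : sgword k I i₀ w = (w.map (sgx k I i₀)).prod := by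
  rw [sgword, map_list_prod, List.map_map]
  rfl

theorem sgword_nil : sgword k I i₀ [] = 1 := by
  rw [sgword_eq_prod, List.map_nil, List.prod_nil]

theorem sgword_append (u v : List I) :
    sgword k I i₀ (u ++ v) = sgword k I i₀ u * sgword k I i₀ v := by
  simp only [sgword_eq_prod, List.map_append, List.prod_append]

theorem sgx_mul_sgx (w v : I) :
    sgx k I i₀ w * sgx k I i₀ v = sgx k I i₀ i₀ * sgx k I i₀ v := by
  by_cases hw : w = i₀
  · rw [hw]
  · simp only [sgx, ← map_mul]
    exact RingQuot.mkAlgHom_rel k ⟨w, v, hw, rfl, rfl⟩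

theorem sgx_mul_pow_mul (w v : I) (t : ℕ) :
    sgx k I i₀ w * (sgx k I i₀ i₀ ^ t * sgx k I i₀ v) =
      sgx k I i₀ i₀ ^ (t + 1) * sgx k I i₀ v := by
  cases t with
  | zero => rw [pow_zero, one_mul, zero_add, pow_one, sgx_mul_sgx]
  | succ t =>
    simp only [pow_succ' _ (t + 1), pow_succ' _ t, ← mul_assoc]
    rw [sgx_mul_sgx w i₀]

theorem adjoin_range_sgx : Algebra.adjoin k (Set.range (sgx k I i₀)) = ⊤ := by
  rw [show Set.range (sgx k I i₀) = RingQuot.mkAlgHom k (segRel k I i₀) '' Set.range (ι k) from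
      Set.range_comp _ _, Algebra.adjoin_image, FreeAlgebra.adjoin_range_ι, Algebra.map_top,
    AlgHom.range_eq_top]
  exact RingQuot.mkAlgHom_surjective k _

theorem range_eq_adjoin_range_sgx {B : Type*} [Semiring B] [Algebra k B]
    (f : SegYBA k I i₀ →ₐ[k] B) : f.range = Algebra.adjoin k (Set.range (f ∘ sgx k I i₀)) := by
  rw [Set.range_comp, Algebra.adjoin_image, adjoin_range_sgx, Algebra.map_top]

variable (k I i₀) in
def normalWordHom : NormalWord_s19 I →ₙ* SegYBA k I i₀ where
  toFun g := sgx k I i₀ i₀ ^ g.exp * sgx k I i₀ g.last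
  map_mul' g h := by
    rw [NormalWord_s19.mul_def, mul_assoc, sgx_mul_pow_mul, ← mul_assoc, ← pow_add, add_assoc]

variable (k I i₀) in
def ofMonoidAlgebra : MonoidAlgebra k (WithOne (NormalWord_s19 I)) →ₐ[k] SegYBA k I i₀ :=
  MonoidAlgebra.lift k (SegYBA k I i₀) _ (WithOne.lift (normalWordHom k I i₀))

variable (k I i₀) in
def toMonoidAlgebra : SegYBA k I i₀ →ₐ[k] MonoidAlgebra k (WithOne (NormalWord_s19 I)) :=
  RingQuot.liftAlgHom k
    ⟨FreeAlgebra.lift k fun i => MonoidAlgebra.of k _ ↑(⟨0, i⟩ : NormalWord_s19 I), by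
      rintro _ _ ⟨w, v, -, rfl, rfl⟩
      simp only [map_mul, FreeAlgebra.lift_ι_apply]
      rw [← map_mul, ← map_mul, ← WithOne.coe_mul, ← WithOne.coe_mul]
      rfl⟩

theorem ofMonoidAlgebra_of (g : NormalWord_s19 I) :
    ofMonoidAlgebra k I i₀ (MonoidAlgebra.of k _ ↑g) =
      sgx k I i₀ i₀ ^ g.exp * sgx k I i₀ g.last := by
  rw [ofMonoidAlgebra, MonoidAlgebra.lift_of, WithOne.lift_coe]
  rfl

theorem toMonoidAlgebra_sgx (i : I) :
    toMonoidAlgebra k I i₀ (sgx k I i₀ i) = MonoidAlgebra.of k _ ↑(⟨0, i⟩ : NormalWord_s19 I) := by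
  rw [toMonoidAlgebra, sgx, RingQuot.liftAlgHom_mkAlgHom_apply, FreeAlgebra.lift_ι_apply]

theorem toMonoidAlgebra_pow_mul_sgx (t : ℕ) (i : I) :
    toMonoidAlgebra k I i₀ (sgx k I i₀ i₀ ^ t * sgx k I i₀ i) =
      MonoidAlgebra.of k _ ↑(⟨t, i⟩ : NormalWord_s19 I) := by
  rw [map_mul, map_pow, toMonoidAlgebra_sgx, toMonoidAlgebra_sgx, ← map_pow, ← map_mul,
    NormalWord_s19.mk_zero_pow_mul]

variable (k I i₀) in
def equivMonoidAlgebra : SegYBA k I i₀ ≃ₐ[k] MonoidAlgebra k (WithOne (NormalWord_s19 I)) :=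
  AlgEquiv.ofAlgHom (toMonoidAlgebra k I i₀) (ofMonoidAlgebra k I i₀)
    (MonoidAlgebra.algHom_ext (fun g => by
      induction g using WithOne.recOneCoe with
      | one => simp [← MonoidAlgebra.one_def]
      | coe g =>
        rw [← MonoidAlgebra.of_apply, AlgHom.comp_apply, ofMonoidAlgebra_of,
          toMonoidAlgebra_pow_mul_sgx]
        rfl)
      (Subsingleton.elim _ _))
    (RingQuot.ringQuot_ext' k _ _ <| FreeAlgebra.hom_ext <| funext fun i => by
      change ofMonoidAlgebra k I i₀ (toMonoidAlgebra k I i₀ (sgx k I i₀ i)) = sgx k I i₀ i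
      rw [toMonoidAlgebra_sgx, ofMonoidAlgebra_of, pow_zero, one_mul])

variable (k I i₀) in
def normalBasis : Module.Basis (WithOne (NormalWord_s19 I)) k (SegYBA k I i₀) :=
  (MonoidAlgebra.basis _ k).map (equivMonoidAlgebra k I i₀).symm.toLinearEquiv

theorem normalBasis_one : normalBasis k I i₀ 1 = 1 := by
  simp [normalBasis, MonoidAlgebra.one_def]

theorem normalBasis_coe (g : NormalWord_s19 I) :
    normalBasis k I i₀ g = sgx k I i₀ i₀ ^ g.exp * sgx k I i₀ g.last := by
  rw [normalBasis, Module.Basis.map_apply, MonoidAlgebra.basis_apply, ← MonoidAlgebra.of_apply]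
  exact ofMonoidAlgebra_of (k := k) (i₀ := i₀) g

variable {J : Type*} {j₀ : J}

variable (k I i₀ J j₀) in
def segreMap : SegYBA k (I × J) (i₀, j₀) →ₐ[k] SegYBA k I i₀ ⊗[k] SegYBA k J j₀ :=
  RingQuot.liftAlgHom k ⟨FreeAlgebra.lift k fun p => sgx k I i₀ p.1 ⊗ₜ sgx k J j₀ p.2, by
    rintro _ _ ⟨w, v, -, rfl, rfl⟩
    simp only [map_mul, FreeAlgebra.lift_ι_apply, Algebra.TensorProduct.tmul_mul_tmul,
      sgx_mul_sgx w.1, sgx_mul_sgx w.2]⟩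

theorem segreMap_sgx (p : I × J) :
    segreMap k I i₀ J j₀ (sgx k (I × J) (i₀, j₀) p) = sgx k I i₀ p.1 ⊗ₜ sgx k J j₀ p.2 := by
  rw [segreMap, sgx, RingQuot.liftAlgHom_mkAlgHom_apply, FreeAlgebra.lift_ι_apply]

theorem segreMap_normalBasis (g : WithOne (NormalWord_s19 (I × J))) :
    segreMap k I i₀ J j₀ (normalBasis k (I × J) (i₀, j₀) g) =
      (normalBasis k I i₀).tensorProduct (normalBasis k J j₀) (NormalWord_s19.split g) := by
  induction g using WithOne.recOneCoe with
  | one =>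
    rw [normalBasis_one, map_one, NormalWord_s19.split_one, Module.Basis.tensorProduct_apply,
      normalBasis_one, normalBasis_one, Algebra.TensorProduct.one_def]
  | coe g =>
    rw [normalBasis_coe, map_mul, map_pow, segreMap_sgx, segreMap_sgx, NormalWord_s19.split_coe,
      Module.Basis.tensorProduct_apply, normalBasis_coe, normalBasis_coe,
      Algebra.TensorProduct.tmul_pow, Algebra.TensorProduct.tmul_mul_tmul]

theorem segreMap_injective : Function.Injective (segreMap k I i₀ J j₀) := by
  have hli : LinearIndependent k (segreMap k I i₀ J j₀ ∘ normalBasis k (I × J) (i₀, j₀)) := by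
    rw [show segreMap k I i₀ J j₀ ∘ normalBasis k (I × J) (i₀, j₀) = _ from
      funext segreMap_normalBasis]
    exact ((normalBasis k I i₀).tensorProduct _).linearIndependent.comp _
      NormalWord_s19.split_injective
  convert (normalBasis k (I × J) (i₀, j₀)).injective_constr_of_linearIndependent (R₂ := k) hli
  exact congrArg DFunLike.coe ((normalBasis k (I × J) (i₀, j₀)).constr_self k
    (segreMap k I i₀ J j₀).toLinearMap).symm

variable (k I i₀ J j₀) in
def equalLengthWords : Submonoid (SegYBA k I i₀ ⊗[k] SegYBA k J j₀) where
  carrier := {t | ∃ (u : List I) (v : List J), u.length = v.length ∧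
    t = sgword k I i₀ u ⊗ₜ sgword k J j₀ v}
  one_mem' := ⟨[], [], rfl, by rw [sgword_nil, sgword_nil, Algebra.TensorProduct.one_def]⟩
  mul_mem' := by
    rintro _ _ ⟨u, v, huv, rfl⟩ ⟨u', v', huv', rfl⟩
    exact ⟨u ++ u', v ++ v', by simp [huv, huv'], by
      rw [Algebra.TensorProduct.tmul_mul_tmul, sgword_append, sgword_append]⟩

theorem closure_range_sgx_tmul_sgx :
    Submonoid.closure (Set.range fun p : I × J => sgx k I i₀ p.1 ⊗ₜ[k] sgx k J j₀ p.2) =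
      equalLengthWords k I i₀ J j₀ := by
  refine le_antisymm (Submonoid.closure_le.2 ?_) ?_
  · rintro _ ⟨p, rfl⟩
    exact ⟨[p.1], [p.2], rfl, by simp [sgword_eq_prod]⟩
  · rintro _ ⟨u, v, huv, rfl⟩
    induction u generalizing v with
    | nil =>
      obtain rfl := List.eq_nil_of_length_eq_zero huv.symm
      rw [sgword_nil, sgword_nil, ← Algebra.TensorProduct.one_def]
      exact one_mem _
    | cons a u ih =>
      obtain ⟨b, v, rfl⟩ := List.exists_cons_of_length_eq_add_one huv.symm
      simp only [sgword_eq_prod, List.map_cons, List.prod_cons,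
        ← Algebra.TensorProduct.tmul_mul_tmul] at ih ⊢
      exact Submonoid.mul_mem _ (Submonoid.subset_closure ⟨(a, b), rfl⟩)
        (ih v (by simpa using huv))

theorem segreMap_range_eq_adjoin : (segreMap k I i₀ J j₀).range =
    Algebra.adjoin k (Set.range fun p : I × J => sgx k I i₀ p.1 ⊗ₜ[k] sgx k J j₀ p.2) := by
  rw [range_eq_adjoin_range_sgx, show segreMap k I i₀ J j₀ ∘ sgx k (I × J) (i₀, j₀) = _ from
    funext segreMap_sgx]

theorem coe_segreMap_range :
    ((segreMap k I i₀ J j₀).range : Set (SegYBA k I i₀ ⊗[k] SegYBA k J j₀)) =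
      Submodule.span k (equalLengthWords k I i₀ J j₀ : Set (SegYBA k I i₀ ⊗[k] SegYBA k J j₀)) := by
  rw [segreMap_range_eq_adjoin, ← closure_range_sgx_tmul_sgx, ← Algebra.adjoin_eq_span]
  rfl

end SegYBA

/-- for the Yang–Baxter algebras `A`, `B`, `C` of permutation idempotent
solutions of orders `m`, `n` and `mn`, the assignment `z_{(i,a)} ↦ x_i ⊗ y_a` extends
to a well-defined injective `k`-algebra homomorphism `s_{m,n} : C → A ⊗ B` whose image
is the Segre product `A ∘ B = ⊕_s A_s ⊗ B_s` (the span of the `[u] ⊗ [v]` over pairs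
of words of equal length), which is also the subalgebra generated by the `x_i ⊗ y_a`;
in particular `C ≅ A ∘ B`. -/
theorem stmt_19 (k : Type*) [Field k] (m n : ℕ) [NeZero m] [NeZero n] :
    ∃ s : SegYBA k (Fin m × Fin n) ((0 : Fin m), (0 : Fin n)) →ₐ[k]
        (SegYBA k (Fin m) (0 : Fin m) ⊗[k] SegYBA k (Fin n) (0 : Fin n)),
      (∀ i : Fin m, ∀ a : Fin n,
        s (sgx k (Fin m × Fin n) ((0 : Fin m), (0 : Fin n)) (i, a)) =
          sgx k (Fin m) 0 i ⊗ₜ[k] sgx k (Fin n) 0 a) ∧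
      Function.Injective s ∧
      ((s.range : Set (SegYBA k (Fin m) 0 ⊗[k] SegYBA k (Fin n) 0)) =
        ((Submodule.span k
          {t : SegYBA k (Fin m) 0 ⊗[k] SegYBA k (Fin n) 0 |
            ∃ (u : List (Fin m)) (v : List (Fin n)), u.length = v.length ∧
              t = sgword k (Fin m) 0 u ⊗ₜ[k] sgword k (Fin n) 0 v} :
            Submodule k (SegYBA k (Fin m) 0 ⊗[k] SegYBA k (Fin n) 0)) :
          Set (SegYBA k (Fin m) 0 ⊗[k] SegYBA k (Fin n) 0))) ∧
      s.range = Algebra.adjoin k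
        (Set.range fun ia : Fin m × Fin n =>
          sgx k (Fin m) 0 ia.1 ⊗ₜ[k] sgx k (Fin n) 0 ia.2) := by
  exact ⟨SegYBA.segreMap k (Fin m) 0 (Fin n) 0, fun i a => SegYBA.segreMap_sgx (i, a),
    SegYBA.segreMap_injective, SegYBA.coe_segreMap_range, SegYBA.segreMap_range_eq_adjoin⟩

end
end
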